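/- arXiv:2312.08049 — 7 statements merged into one kernel-verified Lean document; each statement's English description precedes it below -/
import Mathlib

section
/- For any integer n ≥ 2, the minimum over all 2-colorings of the edges of the complete graph K_n of the number of monochromatic triangles equals 2·C(u,3) if n = 2u, (2/3)·u(u−1)(4u+1) if n = 4u+1, and (2/3)·u(u+1)(4u−1) if n = 4u+3. -/
open Finset

attribute [local instance] Classical.propDecidable

/-- The number of monochromatic triangles in a 2-coloring of the edges of `K_n`. -/
noncomputable def monoTriCount (n : ℕ) (G : Sym2 (Fin n) → Fin 2) : ℕ :=
  ((Finset.powersetCard 3 (univ : Finset (Fin n))).filter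
    (fun T => ∃ col : Fin 2, ∀ i ∈ T, ∀ j ∈ T, i ≠ j → G s(i, j) = col)).card

namespace GoodmanAux

variable {n : ℕ}

noncomputable def deg0 (n : ℕ) (G : Sym2 (Fin n) → Fin 2) (v : Fin n) : ℕ :=
  ((univ : Finset (Fin n)).filter (fun w => w ≠ v ∧ G s(v, w) = 0)).card

noncomputable def deg1 (n : ℕ) (G : Sym2 (Fin n) → Fin 2) (v : Fin n) : ℕ :=
  ((univ : Finset (Fin n)).filter (fun w => w ≠ v ∧ G s(v, w) = 1)).card

noncomputable def angleSum (n : ℕ) (G : Sym2 (Fin n) → Fin 2) : ℕ :=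
  ∑ v : Fin n, deg0 n G v * deg1 n G v

lemma deg_add (G : Sym2 (Fin n) → Fin 2) (v : Fin n) :
    deg0 n G v + deg1 n G v = n - 1 := by
  classical
  unfold deg0 deg1
  rw [← Finset.card_union_of_disjoint]
  · have : ((univ : Finset (Fin n)).filter (fun w => w ≠ v ∧ G s(v, w) = 0)) ∪
        ((univ : Finset (Fin n)).filter (fun w => w ≠ v ∧ G s(v, w) = 1)) =
        (univ : Finset (Fin n)).filter (fun w => w ≠ v) := by
      rw [← Finset.filter_or]
      apply Finset.filter_congr
      intro w _
      have h2 : G s(v,w) = 0 ∨ G s(v,w) = 1 := by omega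
      constructor
      · tauto
      · tauto
    rw [this, Finset.filter_ne', Finset.card_erase_of_mem (mem_univ v)]
    simp
  · rw [Finset.disjoint_filter]
    rintro w _ ⟨_, h0⟩ ⟨_, h1⟩
    rw [h0] at h1; exact absurd h1 (by decide)

noncomputable def W (n : ℕ) (g : Fin n → Fin n → Fin n → ℕ) : ℕ :=
  ∑ a : Fin n, ∑ b : Fin n, ∑ c : Fin n,
    if a ≠ b ∧ a ≠ c ∧ b ≠ c then g a b c else 0

lemma W_congr {g h : Fin n → Fin n → Fin n → ℕ}
    (H : ∀ a b c : Fin n, a ≠ b → a ≠ c → b ≠ c → g a b c = h a b c) :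
    W n g = W n h := by
  unfold W
  refine Finset.sum_congr rfl fun a _ => Finset.sum_congr rfl fun b _ =>
    Finset.sum_congr rfl fun c _ => ?_
  split_ifs with hd
  · exact H a b c hd.1 hd.2.1 hd.2.2
  · rfl

lemma W_swap12 (g : Fin n → Fin n → Fin n → ℕ) :
    W n (fun a b c => g b a c) = W n g := by
  unfold W
  rw [Finset.sum_comm]
  refine Finset.sum_congr rfl fun a _ => Finset.sum_congr rfl fun b _ =>
    Finset.sum_congr rfl fun c _ => ?_
  refine if_congr ?_ rfl rfl
  constructor <;> rintro ⟨h1, h2, h3⟩ <;> exact ⟨Ne.symm h1, h3, h2⟩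

lemma W_swap23 (g : Fin n → Fin n → Fin n → ℕ) :
    W n (fun a b c => g a c b) = W n g := by
  unfold W
  refine Finset.sum_congr rfl fun a _ => ?_
  rw [Finset.sum_comm]
  refine Finset.sum_congr rfl fun b _ => Finset.sum_congr rfl fun c _ => ?_
  refine if_congr ?_ rfl rfl
  constructor <;> rintro ⟨h1, h2, h3⟩ <;> exact ⟨h2, h1, Ne.symm h3⟩

lemma W_split (g₀ g1 g2 g3 g4 g5 g6 : Fin n → Fin n → Fin n → ℕ) :
    W n (fun a b c => 2 * g₀ a b c +
      (g1 a b c + g2 a b c + g3 a b c + g4 a b c + g5 a b c + g6 a b c))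
    = 2 * W n g₀ + (W n g1 + W n g2 + W n g3 + W n g4 + W n g5 + W n g6) := by
  have hsplit : ∀ (cond : Prop) [Decidable cond] (x y : ℕ),
      (if cond then x + y else 0) = (if cond then x else 0) + (if cond then y else 0) := by
    intros; split_ifs <;> simp
  have hmul : ∀ (cond : Prop) [Decidable cond] (x : ℕ),
      (if cond then 2 * x else 0) = 2 * (if cond then x else 0) := by
    intros; split_ifs <;> simp
  unfold W
  simp only [hsplit, hmul, Finset.sum_add_distrib, ← Finset.mul_sum]

lemma W_const : W n (fun _ _ _ => 1) = n * (n - 1) * (n - 2) := by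
  classical
  unfold W
  have h1 : ∀ a b : Fin n,
      (∑ c : Fin n, if a ≠ b ∧ a ≠ c ∧ b ≠ c then 1 else 0)
        = if a ≠ b then n - 2 else 0 := by
    intro a b
    by_cases hab : a = b
    · simp [hab]
    · rw [if_pos hab, ← Finset.card_filter]
      have : (univ : Finset (Fin n)).filter (fun c => a ≠ b ∧ a ≠ c ∧ b ≠ c)
          = (univ.erase b).erase a := by
        ext c; simp [hab]; tauto
      rw [this, Finset.card_erase_of_mem, Finset.card_erase_of_mem (mem_univ b)]
      · simp; omega
      · simp [hab]
  have h2 : ∀ a : Fin n,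
      (∑ b : Fin n, if a ≠ b then n - 2 else 0) = (n - 1) * (n - 2) := by
    intro a
    rw [Finset.sum_ite, Finset.sum_const_zero, Finset.sum_const, add_zero]
    have : (univ : Finset (Fin n)).filter (fun b => a ≠ b) = univ.erase a := by
      ext b; simp; tauto
    rw [this, Finset.card_erase_of_mem (mem_univ a)]
    simp [mul_comm]
  calc (∑ a : Fin n, ∑ b : Fin n, ∑ c : Fin n,
      if a ≠ b ∧ a ≠ c ∧ b ≠ c then 1 else 0)
      = ∑ a : Fin n, (n-1)*(n-2) := by
        refine Finset.sum_congr rfl fun a _ => ?_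
        rw [← h2 a]
        exact Finset.sum_congr rfl fun b _ => h1 a b
    _ = n * ((n-1)*(n-2)) := by simp [mul_comm]
    _ = n * (n-1) * (n-2) := by ring

noncomputable def Ff (n : ℕ) (G : Sym2 (Fin n) → Fin 2) (a b c : Fin n) : ℕ :=
  if G s(a, b) = 0 ∧ G s(a, c) = 1 then 1 else 0

noncomputable def Mi (n : ℕ) (G : Sym2 (Fin n) → Fin 2) (a b c : Fin n) : ℕ :=
  if G s(a, b) = G s(b, c) ∧ G s(b, c) = G s(a, c) then 1 else 0

lemma key_pointwise (G : Sym2 (Fin n) → Fin 2) (a b c : Fin n)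
    (hab : a ≠ b) (hac : a ≠ c) (hbc : b ≠ c) :
    2 * Mi n G a b c +
      (Ff n G a b c + Ff n G a c b + Ff n G b a c + Ff n G b c a +
        Ff n G c a b + Ff n G c b a) = 2 := by
  unfold Mi Ff
  rw [show s(b,a) = s(a,b) from Sym2.eq_swap, show s(c,a) = s(a,c) from Sym2.eq_swap,
    show s(c,b) = s(b,c) from Sym2.eq_swap]
  generalize G s(a,b) = c1
  generalize G s(b,c) = c2
  generalize G s(a,c) = c3
  revert c1 c2 c3; decide

lemma W_F (G : Sym2 (Fin n) → Fin 2) : W n (Ff n G) = angleSum n G := by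
  classical
  unfold W angleSum
  refine Finset.sum_congr rfl fun a _ => ?_
  have key : ∀ b c : Fin n,
      (if a ≠ b ∧ a ≠ c ∧ b ≠ c then Ff n G a b c else 0)
      = (if b ≠ a ∧ G s(a,b) = 0 then 1 else 0) * (if c ≠ a ∧ G s(a,c) = 1 then 1 else 0) := by
    intro b c
    unfold Ff
    by_cases hb : b ≠ a ∧ G s(a,b) = 0 <;> by_cases hc : c ≠ a ∧ G s(a,c) = 1
    · have hbc : b ≠ c := by
        rintro rfl; rw [hb.2] at hc; exact absurd hc.2 (by decide)
      rw [if_pos ⟨hb.1.symm, hc.1.symm, hbc⟩, if_pos ⟨hb.2, hc.2⟩, if_pos hb, if_pos hc]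
    · rw [if_neg hc, mul_zero]
      split_ifs with h1 h2
      · exact absurd ⟨h1.2.1.symm, h2.2⟩ hc
      · rfl
      · rfl
    · rw [if_neg hb, zero_mul]
      split_ifs with h1 h2
      · exact absurd ⟨h1.1.symm, h2.1⟩ hb
      · rfl
      · rfl
    · rw [if_neg hb, zero_mul]
      split_ifs with h1 h2
      · exact absurd ⟨h1.1.symm, h2.1⟩ hb
      · rfl
      · rfl
  calc (∑ b : Fin n, ∑ c : Fin n, if a ≠ b ∧ a ≠ c ∧ b ≠ c then Ff n G a b c else 0)
      = ∑ b : Fin n, ∑ c : Fin n,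
        (if b ≠ a ∧ G s(a,b) = 0 then 1 else 0) * (if c ≠ a ∧ G s(a,c) = 1 then 1 else 0) := by
        exact Finset.sum_congr rfl fun b _ => Finset.sum_congr rfl fun c _ => key b c
    _ = (∑ b : Fin n, if b ≠ a ∧ G s(a,b) = 0 then 1 else 0) *
        (∑ c : Fin n, if c ≠ a ∧ G s(a,c) = 1 then 1 else 0) := by
        rw [Finset.sum_mul_sum]
    _ = deg0 n G a * deg1 n G a := by
        unfold deg0 deg1
        rw [Finset.card_filter, Finset.card_filter]

lemma card_perm3 {α : Type*} [DecidableEq α] (T : Finset α) (hT : T.card = 3) :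
    ((T ×ˢ T ×ˢ T).filter
      (fun t => t.1 ≠ t.2.1 ∧ t.1 ≠ t.2.2 ∧ t.2.1 ≠ t.2.2)).card = 6 := by
  classical
  rw [Finset.card_filter, Finset.sum_product]
  have h1 : ∀ a ∈ T, (∑ p ∈ T ×ˢ T,
      if a ≠ p.1 ∧ a ≠ p.2 ∧ p.1 ≠ p.2 then 1 else 0) = 2 := by
    intro a ha
    rw [Finset.sum_product]
    have h2 : ∀ b ∈ T, (∑ c ∈ T, if a ≠ b ∧ a ≠ c ∧ b ≠ c then 1 else 0)
        = if a ≠ b then 1 else 0 := by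
      intro b hb
      by_cases hab : a = b
      · simp [hab]
      · rw [if_pos hab, ← Finset.card_filter]
        have : T.filter (fun c => a ≠ b ∧ a ≠ c ∧ b ≠ c) = (T.erase b).erase a := by
          ext c; simp [hab]; tauto
        rw [this, Finset.card_erase_of_mem, Finset.card_erase_of_mem hb, hT]
        rw [Finset.mem_erase]; exact ⟨hab, ha⟩
    rw [Finset.sum_congr rfl h2, ← Finset.card_filter]
    have : T.filter (fun b => a ≠ b) = T.erase a := by
      ext b; simp; tauto
    rw [this, Finset.card_erase_of_mem ha, hT]
  rw [Finset.sum_congr rfl h1, Finset.sum_const, hT]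
  rfl

lemma W_Mi (G : Sym2 (Fin n) → Fin 2) : W n (Mi n G) = 6 * monoTriCount n G := by
  classical
  set D : Fin n × Fin n × Fin n → Prop :=
    fun t => t.1 ≠ t.2.1 ∧ t.1 ≠ t.2.2 ∧ t.2.1 ≠ t.2.2 with hD
  set mp : Fin n × Fin n × Fin n → Prop :=
    fun t => G s(t.1, t.2.1) = G s(t.2.1, t.2.2) ∧ G s(t.2.1, t.2.2) = G s(t.1, t.2.2)
    with hmp
  set X : Finset (Fin n × Fin n × Fin n) :=
    univ.filter (fun t => D t ∧ mp t) with hX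
  set M : Finset (Fin n) → Prop :=
    fun T => ∃ col : Fin 2, ∀ i ∈ T, ∀ j ∈ T, i ≠ j → G s(i, j) = col with hM
  set P3f : Finset (Finset (Fin n)) :=
    (Finset.powersetCard 3 (univ : Finset (Fin n))).filter M with hP3f
  have step1 : W n (Mi n G) = X.card := by
    rw [hX, Finset.card_filter]
    unfold W
    rw [Fintype.sum_prod_type]
    refine Finset.sum_congr rfl fun a _ => ?_
    rw [Fintype.sum_prod_type]
    refine Finset.sum_congr rfl fun b _ => Finset.sum_congr rfl fun c _ => ?_
    unfold Mi
    simp only [hD, hmp]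
    split_ifs <;> tauto
  have hcard3 : ∀ a b c : Fin n, a ≠ b → a ≠ c → b ≠ c →
      ({a, b, c} : Finset (Fin n)).card = 3 := by
    intro a b c hab hac hbc
    rw [Finset.card_insert_of_notMem (by simp [hab, hac]),
      Finset.card_insert_of_notMem (by simp [hbc]), Finset.card_singleton]
  have H1 : ∀ t ∈ X, ({t.1, t.2.1, t.2.2} : Finset (Fin n)) ∈ P3f := by
    rintro ⟨a, b, c⟩ ht
    rw [hX, Finset.mem_filter] at ht
    obtain ⟨-, ⟨hab, hac, hbc⟩, m1, m2⟩ := ht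
    rw [hP3f, Finset.mem_filter, Finset.mem_powersetCard]
    refine ⟨⟨Finset.subset_univ _, hcard3 a b c hab hac hbc⟩, G s(a, b), ?_⟩
    intro i hi j hj hij
    simp only [Finset.mem_insert, Finset.mem_singleton] at hi hj
    obtain rfl | rfl | rfl := hi <;> obtain rfl | rfl | rfl := hj <;>
      first
        | exact absurd rfl hij
        | rfl
        | exact m1.symm
        | exact (m1.trans m2).symm
        | (rw [Sym2.eq_swap]
           try first | rfl | exact m1.symm | exact (m1.trans m2).symm
           try exact m2.symm
           try exact m2)
  have H2 : ∀ T ∈ P3f,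
      (X.filter (fun t => ({t.1, t.2.1, t.2.2} : Finset (Fin n)) = T)).card = 6 := by
    intro T hT
    rw [hP3f, Finset.mem_filter, Finset.mem_powersetCard] at hT
    obtain ⟨⟨-, hTcard⟩, col, hcol⟩ := hT
    have hfiber : X.filter (fun t => ({t.1, t.2.1, t.2.2} : Finset (Fin n)) = T)
        = (T ×ˢ T ×ˢ T).filter D := by
      ext ⟨a, b, c⟩
      simp only [Finset.mem_filter, hX, Finset.mem_univ, true_and, Finset.mem_product]
      constructor
      · rintro ⟨⟨hD', hmp'⟩, hset⟩
        refine ⟨?_, hD'⟩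
        rw [← hset]
        exact ⟨by simp, by simp, by simp⟩
      · rintro ⟨⟨ha, hb, hc⟩, hab, hac, hbc⟩
        refine ⟨⟨⟨hab, hac, hbc⟩, ?_, ?_⟩, ?_⟩
        · rw [hcol a ha b hb hab, hcol b hb c hc hbc]
        · rw [hcol b hb c hc hbc, hcol a ha c hc hac]
        · refine Finset.eq_of_subset_of_card_le ?_ ?_
          · intro x hx
            simp only [Finset.mem_insert, Finset.mem_singleton] at hx
            obtain rfl | rfl | rfl := hx <;> assumption
          · rw [hTcard, hcard3 a b c hab hac hbc]
    rw [hfiber]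
    exact card_perm3 T hTcard
  rw [step1, Finset.card_eq_sum_card_fiberwise H1, Finset.sum_congr rfl H2,
    Finset.sum_const, smul_eq_mul, mul_comm]
  rfl

/-- Goodman's counting identity. -/
lemma master (G : Sym2 (Fin n) → Fin 2) :
    12 * monoTriCount n G + 6 * angleSum n G = 2 * (n * (n - 1) * (n - 2)) := by
  have key : W n (fun a b c => 2 * Mi n G a b c +
      (Ff n G a b c + Ff n G a c b + Ff n G b a c + Ff n G b c a +
        Ff n G c a b + Ff n G c b a))
      = W n (fun _ _ _ => 2) :=
    W_congr fun a b c h1 h2 h3 => by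
      rw [key_pointwise G a b c h1 h2 h3]
  rw [W_split] at key
  have e1 : W n (fun a b c => Ff n G a c b) = W n (Ff n G) := W_swap23 _
  have e2 : W n (fun a b c => Ff n G b a c) = W n (Ff n G) := W_swap12 _
  have e3 : W n (fun a b c => Ff n G b c a) = W n (Ff n G) :=
    (W_swap12 (fun a b c => Ff n G a c b)).trans e1
  have e4 : W n (fun a b c => Ff n G c a b) = W n (Ff n G) :=
    (W_swap23 (fun a b c => Ff n G b a c)).trans e2
  have e5 : W n (fun a b c => Ff n G c b a) = W n (Ff n G) :=
    (W_swap12 (fun a b c => Ff n G c a b)).trans e4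
  have e6 : W n (fun (_ _ _ : Fin n) => (2:ℕ)) = 2 * (n * (n-1) * (n-2)) := by
    have h : W n (fun (_ _ _ : Fin n) => (2:ℕ)) = 2 * W n (fun _ _ _ => 1) := by
      unfold W
      simp only [Finset.mul_sum]
      refine Finset.sum_congr rfl fun a _ => Finset.sum_congr rfl fun b _ =>
        Finset.sum_congr rfl fun c _ => ?_
      split_ifs <;> simp
    rw [h, W_const]
  simp only [e1, e2, e3, e4, e5, W_Mi G, W_F G, e6] at key
  omega

lemma sInf_eq (B : ℕ) (G₀ : Sym2 (Fin n) → Fin 2)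
    (hub : ∀ G : Sym2 (Fin n) → Fin 2, angleSum n G ≤ B)
    (h0 : angleSum n G₀ = B) :
    sInf {k | ∃ G : Sym2 (Fin n) → Fin 2, k = monoTriCount n G} = monoTriCount n G₀ := by
  refine le_antisymm (Nat.sInf_le ⟨G₀, rfl⟩) (le_csInf ⟨_, G₀, rfl⟩ ?_)
  rintro k ⟨G, rfl⟩
  have h1 := master G₀
  have h2 := master G
  have h3 := hub G
  omega


lemma de_le_even (d e k : ℕ) (h : d + e = 2*k) : d*e ≤ k*k := by
  zify at h ⊢
  nlinarith [sq_nonneg ((d:ℤ) - (e:ℤ))]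

lemma de_le_odd (d e k : ℕ) (h : d + e = 2*k+1) : d*e ≤ k*(k+1) := by
  have hne : d ≠ e := by omega
  zify at h ⊢
  have h1 : ((d:ℤ) - e)^2 ≥ 1 := by
    have : (d:ℤ) ≠ e := by exact_mod_cast fun hh => hne (by exact_mod_cast hh)
    rcases lt_or_gt_of_ne this with hlt | hgt <;> nlinarith
  nlinarith


noncomputable def Ga (n u : ℕ) : Sym2 (Fin n) → Fin 2 :=
  Sym2.lift ⟨fun i j => if (((i:ℕ) < u) ↔ ((j:ℕ) < u)) then 0 else 1,
    fun a b => if_congr Iff.comm rfl rfl⟩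

lemma Ga_val (u : ℕ) (i j : Fin n) :
    Ga n u s(i, j) = if (((i:ℕ) < u) ↔ ((j:ℕ) < u)) then 0 else 1 := by
  simp [Ga]

lemma card_val_lt (u : ℕ) (h : u ≤ n) :
    ((univ : Finset (Fin n)).filter (fun w : Fin n => (w:ℕ) < u)).card = u := by
  classical
  rw [← Finset.card_range u]
  apply Finset.card_bij' (i := fun (a : Fin n) _ => (a : ℕ))
    (j := fun b hb => (⟨b, lt_of_lt_of_le (Finset.mem_range.1 hb) h⟩ : Fin n))
  all_goals intro a ha
  all_goals try simp_all [Finset.mem_range]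
  all_goals try omega
  all_goals exact Finset.mem_range.1 ha

lemma deg0_Ga (u : ℕ) (hn : n = 2 * u) (v : Fin n) :
    deg0 n (Ga n u) v = u - 1 := by
  classical
  unfold deg0
  have hval : ∀ w : Fin n, (Ga n u s(v, w) = 0) ↔ (((v:ℕ) < u) ↔ ((w:ℕ) < u)) := by
    intro w
    rw [Ga_val]
    split_ifs with h
    · simp [h]
    · simp [h]
  by_cases hv : (v : ℕ) < u
  · have : ((univ : Finset (Fin n)).filter (fun w => w ≠ v ∧ Ga n u s(v, w) = 0))
        = ((univ : Finset (Fin n)).filter (fun w : Fin n => (w:ℕ) < u)).erase v := by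
      ext w
      simp only [Finset.mem_filter, Finset.mem_erase, Finset.mem_univ, true_and, hval]
      tauto
    rw [this, Finset.card_erase_of_mem (by simp [hv]), card_val_lt u (by omega)]
  · have : ((univ : Finset (Fin n)).filter (fun w => w ≠ v ∧ Ga n u s(v, w) = 0))
        = ((univ : Finset (Fin n)).filter (fun w : Fin n => ¬ ((w:ℕ) < u))).erase v := by
      ext w
      simp only [Finset.mem_filter, Finset.mem_erase, Finset.mem_univ, true_and, hval]
      tauto
    rw [this, Finset.card_erase_of_mem (by simp; omega), Finset.filter_not,
      Finset.card_sdiff_of_subset (Finset.filter_subset _ _), card_val_lt u (by omega)]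
    simp
    omega

lemma six_choose (u : ℕ) : 6 * u.choose 3 = u * (u - 1) * (u - 2) := by
  rw [show (6:ℕ) = Nat.factorial 3 from rfl, ← Nat.descFactorial_eq_factorial_mul_choose]
  simp [Nat.descFactorial]
  ring

def cdist (n : ℕ) (i j : Fin n) : ℕ :=
  min ((i.val + n - j.val) % n) ((j.val + n - i.val) % n)

lemma cdist_comm (i j : Fin n) : cdist n i j = cdist n j i := min_comm _ _

lemma modfact (x : ℕ) (hn : 0 < n) (hx : x < n + n) :
    (x < n ∧ x % n = x) ∨ (n ≤ x ∧ x % n = x - n) := by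
  by_cases h : x < n
  · exact Or.inl ⟨h, Nat.mod_eq_of_lt h⟩
  · right
    refine ⟨le_of_not_gt h, ?_⟩
    rw [Nat.mod_eq_sub_mod (le_of_not_gt h)]
    exact Nat.mod_eq_of_lt (by omega)

lemma circ_card (u : ℕ) (h : 2*u+1 ≤ n) (v : Fin n) :
    ((univ : Finset (Fin n)).filter (fun w => w ≠ v ∧ cdist n v w ≤ u)).card = 2*u := by
  classical
  have npos : 0 < n := by omega
  have hDcard : (Finset.Icc 1 u ∪ Finset.Icc (n-u) (n-1)).card = 2*u := by
    rw [Finset.card_union_of_disjoint, Nat.card_Icc, Nat.card_Icc]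
    · omega
    · rw [Finset.disjoint_left]
      intro a ha hb
      simp only [Finset.mem_Icc] at ha hb
      omega
  rw [← hDcard]
  apply Finset.card_bij' (i := fun (w : Fin n) _ => (w.val + n - v.val) % n)
    (j := fun r _ => (⟨(v.val + r) % n, Nat.mod_lt _ npos⟩ : Fin n))
  case hi =>
    intro w hw
    simp only [Finset.mem_filter, Finset.mem_univ, true_and] at hw
    obtain ⟨hne, hd⟩ := hw
    have hne' : w.val ≠ v.val := fun hh => hne (Fin.ext hh)
    have h1 := modfact (v.val + n - w.val) npos (by omega)
    have h2 := modfact (w.val + n - v.val) npos (by omega)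
    unfold cdist at hd
    simp only [Finset.mem_union, Finset.mem_Icc]
    have hv := v.isLt; have hw' := w.isLt
    rcases h1 with ⟨a1, b1⟩ | ⟨a1, b1⟩ <;> rcases h2 with ⟨a2, b2⟩ | ⟨a2, b2⟩ <;>
      rw [b1, b2] at hd <;> rw [b2] <;> omega
  case hj =>
    intro r hr
    simp only [Finset.mem_union, Finset.mem_Icc] at hr
    have hv := v.isLt
    simp only [Finset.mem_filter, Finset.mem_univ, true_and]
    constructor
    · intro hh
      have hh' : (v.val + r) % n = v.val := congrArg Fin.val hh
      rcases modfact (v.val + r) npos (by omega) with ⟨a1, b1⟩ | ⟨a1, b1⟩ <;> omega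
    · show min ((v.val + n - (v.val + r) % n) % n) (((v.val + r) % n + n - v.val) % n) ≤ u
      rcases modfact (v.val + r) npos (by omega) with ⟨a1, b1⟩ | ⟨a1, b1⟩ <;> rw [b1]
      · rcases modfact (v.val + n - (v.val + r)) npos (by omega) with ⟨a2, b2⟩ | ⟨a2, b2⟩ <;>
          rcases modfact ((v.val + r) + n - v.val) npos (by omega) with ⟨a3, b3⟩ | ⟨a3, b3⟩ <;>
          rw [b2, b3] <;> omega
      · rcases modfact (v.val + n - (v.val + r - n)) npos (by omega) with ⟨a2, b2⟩ | ⟨a2, b2⟩ <;>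
          rcases modfact ((v.val + r - n) + n - v.val) npos (by omega) with ⟨a3, b3⟩ | ⟨a3, b3⟩ <;>
          rw [b2, b3] <;> omega
  case left_inv =>
    intro w hw
    simp only [Finset.mem_filter, Finset.mem_univ, true_and] at hw
    have hne' : w.val ≠ v.val := fun hh => hw.1 (Fin.ext hh)
    have hv := v.isLt; have hw2 := w.isLt
    apply Fin.ext
    show (v.val + (w.val + n - v.val) % n) % n = w.val
    rcases modfact (w.val + n - v.val) npos (by omega) with ⟨a2, b2⟩ | ⟨a2, b2⟩ <;> rw [b2]
    · rcases modfact (v.val + (w.val + n - v.val)) npos (by omega) with ⟨a3, b3⟩ | ⟨a3, b3⟩ <;>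
        rw [b3] <;> omega
    · rcases modfact (v.val + (w.val + n - v.val - n)) npos (by omega) with ⟨a3, b3⟩ | ⟨a3, b3⟩ <;>
        rw [b3] <;> omega
  case right_inv =>
    intro r hr
    simp only [Finset.mem_union, Finset.mem_Icc] at hr
    have hv := v.isLt
    show ((v.val + r) % n + n - v.val) % n = r
    rcases modfact (v.val + r) npos (by omega) with ⟨a1, b1⟩ | ⟨a1, b1⟩ <;> rw [b1]
    · rcases modfact ((v.val + r) + n - v.val) npos (by omega) with ⟨a3, b3⟩ | ⟨a3, b3⟩ <;>
        rw [b3] <;> omega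
    · rcases modfact ((v.val + r - n) + n - v.val) npos (by omega) with ⟨a3, b3⟩ | ⟨a3, b3⟩ <;>
        rw [b3] <;> omega


noncomputable def Gb (n u : ℕ) : Sym2 (Fin n) → Fin 2 :=
  Sym2.lift ⟨fun i j => if (i ≠ j ∧ cdist n i j ≤ u) then 0 else 1,
    fun a b => if_congr (by rw [cdist_comm]; tauto) rfl rfl⟩

lemma deg0_Gb (u : ℕ) (h : 2*u+1 ≤ n) (v : Fin n) : deg0 n (Gb n u) v = 2*u := by
  classical
  unfold deg0
  rw [← circ_card u h v]
  refine congrArg Finset.card (Finset.filter_congr ?_)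
  intro w _
  have : Gb n u s(v, w) = if (v ≠ w ∧ cdist n v w ≤ u) then 0 else 1 := by simp [Gb]
  rw [this]
  split_ifs with hc
  · exact ⟨fun ⟨h1, _⟩ => ⟨h1, hc.2⟩, fun ⟨h1, _⟩ => ⟨h1, rfl⟩⟩
  · constructor
    · rintro ⟨h1, h2⟩; exact absurd h2 (by decide)
    · rintro ⟨h1, h2⟩; exact absurd ⟨Ne.symm h1, h2⟩ hc

noncomputable def Gc (n u : ℕ) : Sym2 (Fin n) → Fin 2 :=
  Sym2.lift ⟨fun i j => if (i ≠ j ∧ (cdist n i j ≤ u ∨ i.val + (2*u+1) = j.val ∨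
      j.val + (2*u+1) = i.val)) then 0 else 1,
    fun a b => if_congr (by rw [cdist_comm]; tauto) rfl rfl⟩

lemma deg0_Gc (u : ℕ) (h : n = 4*u+3) (v : Fin n) :
    deg0 n (Gc n u) v = if v.val = 2*u+1 then 2*u+2 else 2*u+1 := by
  classical
  have npos : 0 < n := by omega
  unfold deg0
  have hval : ∀ w : Fin n, (Gc n u s(v, w) = 0) ↔
      (v ≠ w ∧ (cdist n v w ≤ u ∨ v.val + (2*u+1) = w.val ∨ w.val + (2*u+1) = v.val)) := by
    intro w
    have : Gc n u s(v, w) = if (v ≠ w ∧ (cdist n v w ≤ u ∨ v.val + (2*u+1) = w.val ∨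
        w.val + (2*u+1) = v.val)) then 0 else 1 := by simp [Gc]
    rw [this]
    split_ifs with hc
    · simp [hc]
    · exact iff_of_false (by decide) hc
  have hsplit : (univ : Finset (Fin n)).filter (fun w => w ≠ v ∧ Gc n u s(v, w) = 0)
      = ((univ : Finset (Fin n)).filter (fun w => w ≠ v ∧ cdist n v w ≤ u))
        ∪ ((univ : Finset (Fin n)).filter
            (fun w => w ≠ v ∧ (v.val + (2*u+1) = w.val ∨ w.val + (2*u+1) = v.val))) := by
    ext w
    simp only [Finset.mem_filter, Finset.mem_univ, true_and, Finset.mem_union, hval]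
    constructor
    · rintro ⟨h1, h2, h3 | h3⟩
      · exact Or.inl ⟨h1, h3⟩
      · exact Or.inr ⟨h1, h3⟩
    · rintro (⟨h1, h2⟩ | ⟨h1, h2⟩)
      · exact ⟨h1, Ne.symm h1, Or.inl h2⟩
      · exact ⟨h1, Ne.symm h1, Or.inr h2⟩
  have hdisj : Disjoint ((univ : Finset (Fin n)).filter (fun w => w ≠ v ∧ cdist n v w ≤ u))
      ((univ : Finset (Fin n)).filter
        (fun w => w ≠ v ∧ (v.val + (2*u+1) = w.val ∨ w.val + (2*u+1) = v.val))) := by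
    rw [Finset.disjoint_left]
    intro w hw1 hw2
    simp only [Finset.mem_filter, Finset.mem_univ, true_and] at hw1 hw2
    obtain ⟨-, hd⟩ := hw1
    obtain ⟨-, hm⟩ := hw2
    have hv := v.isLt; have hw' := w.isLt
    unfold cdist at hd
    rcases modfact (v.val + n - w.val) npos (by omega) with ⟨a1, b1⟩ | ⟨a1, b1⟩ <;>
      rcases modfact (w.val + n - v.val) npos (by omega) with ⟨a2, b2⟩ | ⟨a2, b2⟩ <;>
      rw [b1, b2] at hd <;> omega
  have hmc : ((univ : Finset (Fin n)).filter
      (fun w => w ≠ v ∧ (v.val + (2*u+1) = w.val ∨ w.val + (2*u+1) = v.val))).card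
      = if v.val = 2*u+1 then 2 else 1 := by
    have hv := v.isLt
    split_ifs with hvv
    · have : ((univ : Finset (Fin n)).filter
          (fun w => w ≠ v ∧ (v.val + (2*u+1) = w.val ∨ w.val + (2*u+1) = v.val)))
          = {(⟨4*u+2, by omega⟩ : Fin n), (⟨0, by omega⟩ : Fin n)} := by
        ext w
        have hw' := w.isLt
        simp only [Finset.mem_filter, Finset.mem_univ, true_and, Finset.mem_insert,
          Finset.mem_singleton, Ne, Fin.ext_iff]
        omega
      rw [this, Finset.card_insert_of_notMem
          (by simp only [Finset.mem_singleton, Fin.ext_iff]; omega),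
        Finset.card_singleton]
    · by_cases hlt : v.val < 2*u+1
      · have : ((univ : Finset (Fin n)).filter
            (fun w => w ≠ v ∧ (v.val + (2*u+1) = w.val ∨ w.val + (2*u+1) = v.val)))
            = {(⟨v.val + 2*u+1, by omega⟩ : Fin n)} := by
          ext w
          have hw' := w.isLt
          simp only [Finset.mem_filter, Finset.mem_univ, true_and,
            Finset.mem_singleton, Ne, Fin.ext_iff]
          omega
        rw [this, Finset.card_singleton]
      · have : ((univ : Finset (Fin n)).filter
            (fun w => w ≠ v ∧ (v.val + (2*u+1) = w.val ∨ w.val + (2*u+1) = v.val)))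
            = {(⟨v.val - (2*u+1), by omega⟩ : Fin n)} := by
          ext w
          have hw' := w.isLt
          simp only [Finset.mem_filter, Finset.mem_univ, true_and,
            Finset.mem_singleton, Ne, Fin.ext_iff]
          omega
        rw [this, Finset.card_singleton]
  have hGc : (univ : Finset (Fin n)).filter (fun w => w ≠ v ∧ Gc n u s(v, w) = 0)
      = _ := hsplit
  rw [hGc, Finset.card_union_of_disjoint hdisj, circ_card u (by omega) v, hmc]
  split_ifs <;> omega

lemma angleSum_le (G : Sym2 (Fin n) → Fin 2) (Bv : ℕ)
    (hB : ∀ v : Fin n, deg0 n G v * deg1 n G v ≤ Bv) : angleSum n G ≤ n * Bv := by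
  unfold angleSum
  calc (∑ v : Fin n, deg0 n G v * deg1 n G v) ≤ ∑ _v : Fin n, Bv :=
        Finset.sum_le_sum fun v _ => hB v
    _ = n * Bv := by rw [Finset.sum_const, Finset.card_univ, Fintype.card_fin, smul_eq_mul]

lemma angle_Ga (u : ℕ) (hn : n = 2*u) : angleSum n (Ga n u) = n * ((u-1) * u) := by
  unfold angleSum
  have key : ∀ v : Fin n, deg0 n (Ga n u) v * deg1 n (Ga n u) v = (u-1)*u := by
    intro v
    have h1 := deg_add (Ga n u) v
    have h2 := deg0_Ga u hn v
    have hnz : 0 < n := v.pos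
    have h3 : deg1 n (Ga n u) v = u := by omega
    rw [h2, h3]
  rw [Finset.sum_congr rfl (fun v _ => key v), Finset.sum_const, Finset.card_univ,
    Fintype.card_fin, smul_eq_mul]

lemma angle_Gb (u : ℕ) (hn : n = 4*u+1) : angleSum n (Gb n u) = n * (2*u * (2*u)) := by
  unfold angleSum
  have key : ∀ v : Fin n, deg0 n (Gb n u) v * deg1 n (Gb n u) v = 2*u*(2*u) := by
    intro v
    have h1 := deg_add (Gb n u) v
    have h2 := deg0_Gb u (by omega) v
    have h3 : deg1 n (Gb n u) v = 2*u := by omega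
    rw [h2, h3]
  rw [Finset.sum_congr rfl (fun v _ => key v), Finset.sum_const, Finset.card_univ,
    Fintype.card_fin, smul_eq_mul]

lemma angle_Gc (u : ℕ) (hn : n = 4*u+3) :
    angleSum n (Gc n u) = (4*u+2) * ((2*u+1)*(2*u+1)) + (2*u+2)*(2*u) := by
  unfold angleSum
  have v0 : Fin n := ⟨2*u+1, by omega⟩
  rw [← Finset.sum_erase_add (univ : Finset (Fin n)) _ (mem_univ (⟨2*u+1, by omega⟩ : Fin n))]
  have key : ∀ v : Fin n, v.val ≠ 2*u+1 →
      deg0 n (Gc n u) v * deg1 n (Gc n u) v = (2*u+1)*(2*u+1) := by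
    intro v hv
    have h1 := deg_add (Gc n u) v
    have h2 := deg0_Gc u hn v
    rw [if_neg hv] at h2
    have h3 : deg1 n (Gc n u) v = 2*u+1 := by omega
    rw [h2, h3]
  have key0 : deg0 n (Gc n u) (⟨2*u+1, by omega⟩ : Fin n) *
      deg1 n (Gc n u) (⟨2*u+1, by omega⟩ : Fin n) = (2*u+2)*(2*u) := by
    have h1 := deg_add (Gc n u) (⟨2*u+1, by omega⟩ : Fin n)
    have h2 := deg0_Gc u hn (⟨2*u+1, by omega⟩ : Fin n)
    rw [if_pos rfl] at h2
    have h3 : deg1 n (Gc n u) (⟨2*u+1, by omega⟩ : Fin n) = 2*u := by omega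
    rw [h2, h3]
  rw [key0]
  congr 1
  have : ∀ v ∈ (univ : Finset (Fin n)).erase (⟨2*u+1, by omega⟩ : Fin n),
      deg0 n (Gc n u) v * deg1 n (Gc n u) v = (2*u+1)*(2*u+1) := by
    intro v hv
    rw [Finset.mem_erase] at hv
    exact key v (fun hh => hv.1 (Fin.ext hh))
  rw [Finset.sum_congr rfl this, Finset.sum_const,
    Finset.card_erase_of_mem (mem_univ _), Finset.card_univ, Fintype.card_fin,
    smul_eq_mul, hn]
  norm_num

end GoodmanAux

open GoodmanAux in
/-- Goodman's 1959 theorem: the exact minimum number of monochromatic triangles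
over all 2-colorings of `K_n`. -/
theorem goodman_1959 (n : ℕ) (hn : 2 ≤ n) :
    (∀ u : ℕ, n = 2 * u →
      sInf {k | ∃ G : Sym2 (Fin n) → Fin 2, k = monoTriCount n G} = 2 * u.choose 3) ∧
    (∀ u : ℕ, n = 4 * u + 1 →
      3 * sInf {k | ∃ G : Sym2 (Fin n) → Fin 2, k = monoTriCount n G}
        = 2 * (u * (u - 1) * (4 * u + 1))) ∧
    (∀ u : ℕ, n = 4 * u + 3 →
      3 * sInf {k | ∃ G : Sym2 (Fin n) → Fin 2, k = monoTriCount n G}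
        = 2 * (u * (u + 1) * (4 * u - 1))) := by
  refine ⟨?_, ?_, ?_⟩
  · -- even case
    intro u hu
    have hu1 : 1 ≤ u := by omega
    have hB : ∀ G : Sym2 (Fin n) → Fin 2, angleSum n G ≤ n * ((u-1)*u) := by
      intro G
      refine angleSum_le G _ (fun v => ?_)
      have h1 := deg_add G v
      have := de_le_odd (deg0 n G v) (deg1 n G v) (u-1) (by omega)
      rw [show u - 1 + 1 = u by omega] at this
      exact this
    have h0 : angleSum n (Ga n u) = n * ((u-1)*u) := angle_Ga u hu
    rw [sInf_eq (n*((u-1)*u)) (Ga n u) hB h0]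
    have hm := master (Ga n u)
    rw [h0] at hm
    have harith : 12 * (2 * u.choose 3) + 6 * (n * ((u-1)*u)) = 2*(n*(n-1)*(n-2)) := by
      have hc := six_choose u
      have h12 : 12 * (2 * u.choose 3) = 4 * (u*(u-1)*(u-2)) := by omega
      rw [h12]
      by_cases hu2 : u = 1
      · subst hu2; subst hu; norm_num
      · have h2u : 2 ≤ u := by omega
        subst hu
        zify [show (1:ℕ) ≤ u from hu1, h2u, show (1:ℕ) ≤ 2*u by omega,
          show (2:ℕ) ≤ 2*u by omega]
        ring
    omega
  · -- n = 4u+1 case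
    intro u hu
    have hu1 : 1 ≤ u := by omega
    have hB : ∀ G : Sym2 (Fin n) → Fin 2, angleSum n G ≤ n * (2*u*(2*u)) := by
      intro G
      refine angleSum_le G _ (fun v => ?_)
      have h1 := deg_add G v
      have := de_le_even (deg0 n G v) (deg1 n G v) (2*u) (by omega)
      omega
    have h0 : angleSum n (Gb n u) = n * (2*u*(2*u)) := angle_Gb u hu
    rw [sInf_eq (n*(2*u*(2*u))) (Gb n u) hB h0]
    have hm := master (Gb n u)
    rw [h0] at hm
    have harith : 8 * (u*(u-1)*(4*u+1)) + 6 * (n * (2*u*(2*u))) = 2*(n*(n-1)*(n-2)) := by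
      subst hu
      zify [show (1:ℕ) ≤ u from hu1, show (1:ℕ) ≤ 4*u+1 by omega,
        show (2:ℕ) ≤ 4*u+1 by omega]
      ring
    omega
  · -- n = 4u+3 case
    intro u hu
    have hB : ∀ G : Sym2 (Fin n) → Fin 2,
        angleSum n G ≤ (4*u+2) * ((2*u+1)*(2*u+1)) + (2*u+2)*(2*u) := by
      intro G
      have h1 : angleSum n G ≤ n * ((2*u+1)*(2*u+1)) := by
        refine angleSum_le G _ (fun v => ?_)
        have h1 := deg_add G v
        have := de_le_even (deg0 n G v) (deg1 n G v) (2*u+1) (by omega)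
        omega
      have hm := master G
      have hN : n*(n-1)*(n-2) = 2*((4*u+3)*((2*u+1)*(4*u+1))) := by
        have e1 : n - 1 = 4*u+2 := by omega
        have e2 : n - 2 = 4*u+1 := by omega
        rw [e1, e2, hu]; ring
      have hBc1 : n * ((2*u+1)*(2*u+1))
          = ((4*u+2) * ((2*u+1)*(2*u+1)) + (2*u+2)*(2*u)) + 1 := by
        rw [hu]; ring
      have hBc2 : (4*u+2) * ((2*u+1)*(2*u+1)) + (2*u+2)*(2*u)
          = 2 * ((2*u+1)*((2*u+1)*(2*u+1)) + (u+1)*(2*u)) := by ring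
      omega
    have h0 := angle_Gc u hu
    rw [sInf_eq _ (Gc n u) hB h0]
    have hm := master (Gc n u)
    rw [h0] at hm
    have harith : 8 * (u*(u+1)*(4*u-1))
        + 6 * ((4*u+2) * ((2*u+1)*(2*u+1)) + (2*u+2)*(2*u)) = 2*(n*(n-1)*(n-2)) := by
      have e1 : n - 1 = 4*u+2 := by omega
      have e2 : n - 2 = 4*u+1 := by omega
      rw [e1, e2, hu]
      by_cases hu0 : u = 0
      · subst hu0; norm_num
      · zify [show (1:ℕ) ≤ 4*u by omega]
        ring
    omega
end

section
/- Let C be a c-coloring of the edges of the looped complete graph on r vertices (i.e., each unordered pair {u,v} with u,v possibly equal gets a color), such that there exists a color c_ℓ with: every loop has color c_ℓ, and the non-loop edges form a coloring with no monochromatic triangle in any color different from c_ℓ and no edge of color c_ℓ. Then for the uniform weights w_v = 1/r, the weighted embedding density of monochromatic triangles (summed over all colors) in C equals r^(1−3) = 1/r². Consequently m_c(3) ≤ (R_{c−1}(3) − 1)^(−2) by taking C derived from a Ramsey coloring on r = R_{c−1}(3) − 1 vertices. -/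
open Finset Filter Topology

attribute [local instance] Classical.propDecidable

/-- Density of monochromatic `t`-cliques of color `col` in a `c`-coloring of `K_n`. -/
noncomputable def monoDensity (n c t : ℕ) (col : Fin c) (G : Sym2 (Fin n) → Fin c) : ℝ :=
  (((Finset.powersetCard t (univ : Finset (Fin n))).filter
      (fun T => ∀ i ∈ T, ∀ j ∈ T, i ≠ j → G s(i, j) = col)).card : ℝ) / (n.choose t)

/-- Total density of monochromatic `t`-cliques in a `c`-coloring of `K_n`. -/
noncomputable def totalMonoDensity (n c t : ℕ) (G : Sym2 (Fin n) → Fin c) : ℝ :=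
  ∑ col : Fin c, monoDensity n c t col G

/-- The Ramsey multiplicity function `m_c(t; n)`. -/
noncomputable def mcn (c t n : ℕ) : ℝ :=
  ⨅ G : Sym2 (Fin n) → Fin c, totalMonoDensity n c t G

/-- The `w`-weighted embedding density of a coloring `H` of `K_k` in a looped
coloring `C` on `r` vertices. -/
noncomputable def embDensity {k r c : ℕ} (H : Sym2 (Fin k) → Fin c)
    (C : Sym2 (Fin r) → Fin c) (w : Fin r → ℝ) : ℝ :=
  ∑ φ ∈ (univ : Finset (Fin k → Fin r)).filter
      (fun φ => ∀ u v : Fin k, u ≠ v → C s(φ u, φ v) = H s(u, v)),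
    ∏ v : Fin k, w (φ v)

/-- The monochromatic `t`-clique of color `i`, as a coloring of `K_t`. -/
def monoK (c t : ℕ) (i : Fin c) : Sym2 (Fin t) → Fin c := fun _ => i


lemma six_choose_three (n : ℕ) : 6 * n.choose 3 = n * (n-1) * (n-2) := by
  have h := Nat.descFactorial_eq_factorial_mul_choose n 3
  simp [Nat.descFactorial, Nat.factorial] at h
  rw [← h]; ring

lemma choose3_mul (r m : ℕ) (hr : 1 ≤ r) (hm : 3 ≤ m) :
    r^3 * m.choose 3 ≤ (r*m).choose 3 := by
  have ha : r * (m-1) + r = r * m := by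
    rw [← Nat.mul_succ]; congr 1; omega
  have hb : r * (m-2) + 2*r = r * m := by
    have h2 : r * (m-2) + r * 2 = r * (m - 2 + 2) := by rw [Nat.mul_add]
    rw [show r * (m-2) + 2*r = r*(m-2) + r*2 by ring, h2]; congr 1; omega
  have h1 : r * (m-1) ≤ r*m - 1 := by omega
  have h2 : r * (m-2) ≤ r*m - 2 := by omega
  have key : r^3 * (m * (m-1) * (m-2)) ≤ (r*m) * (r*m-1) * (r*m-2) := by
    calc r^3 * (m * (m-1) * (m-2)) = (r*m) * (r*(m-1)) * (r*(m-2)) := by ring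
    _ ≤ (r*m) * (r*m-1) * (r*m-2) :=
      Nat.mul_le_mul (Nat.mul_le_mul_left _ h1) h2
  have h6 : 6 * (r^3 * m.choose 3) ≤ 6 * ((r*m).choose 3) := by
    calc 6 * (r^3 * m.choose 3) = r^3 * (6 * m.choose 3) := by ring
    _ = r^3 * (m * (m-1) * (m-2)) := by rw [six_choose_three]
    _ ≤ (r*m) * (r*m-1) * (r*m-2) := key
    _ = 6 * ((r*m).choose 3) := (six_choose_three (r*m)).symm
  omega

lemma monoDensity_nonneg (n c t : ℕ) (col : Fin c) (G : Sym2 (Fin n) → Fin c) :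
    0 ≤ monoDensity n c t col G := by
  unfold monoDensity; positivity

/-- For a looped coloring `C` on `r` vertices whose loops all have color `cℓ`, whose
non-loop edges avoid `cℓ` and carry no monochromatic triangle, the uniformly weighted
embedding density of monochromatic triangles equals `1/r²`; consequently
`m_c(3) ≤ (R_{c-1}(3) - 1)^{-2}` when `C` comes from a Ramsey coloring on
`r = R_{c-1}(3) - 1` vertices. -/
theorem ramsey_blowup_density (c r : ℕ) (hc : 1 ≤ c) (hr : 1 ≤ r)
    (C : Sym2 (Fin r) → Fin c) (cℓ : Fin c)
    (hloop : ∀ v : Fin r, C s(v, v) = cℓ)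
    (hedge : ∀ u v : Fin r, u ≠ v → C s(u, v) ≠ cℓ)
    (htri : ∀ u v w : Fin r, u ≠ v → u ≠ w → v ≠ w →
      ¬(C s(u, v) = C s(u, w) ∧ C s(u, w) = C s(v, w))) :
    (∑ i : Fin c, embDensity (monoK c 3 i) C (fun _ => (r : ℝ)⁻¹)) = ((r : ℝ)⁻¹) ^ 2 ∧
    (∀ L : ℝ, Tendsto (fun n => mcn c 3 n) atTop (nhds L) → L ≤ ((r : ℝ)⁻¹) ^ 2) := by
  constructor
  · have hr0 : (r : ℝ) ≠ 0 := by positivity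
    rw [Finset.sum_eq_single cℓ]
    · -- main term
      unfold embDensity
      have hset : (univ : Finset (Fin 3 → Fin r)).filter
          (fun φ => ∀ u v : Fin 3, u ≠ v → C s(φ u, φ v) = monoK c 3 cℓ s(u, v))
          = Finset.image (fun x : Fin r => fun _ => x) univ := by
        ext φ
        rw [mem_filter]
        simp only [mem_filter, mem_univ, true_and, mem_image, monoK]
        constructor
        · intro h
          refine ⟨φ 0, funext fun u => ?_⟩
          by_contra hne
          have hu0 : u ≠ 0 := fun h' => hne (by rw [h'])
          exact hedge _ _ (fun h' => hne h'.symm) (h u 0 hu0)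
        · rintro ⟨x, rfl⟩
          intro u v _
          exact hloop x
      rw [hset]
      have hcard : (Finset.image (fun x : Fin r => fun _ : Fin 3 => x) univ).card = r := by
        rw [Finset.card_image_of_injective _ (fun a b h => congrFun h 0), card_univ,
          Fintype.card_fin]
      rw [Finset.sum_congr rfl (fun φ _ => by
        show (∏ _v : Fin 3, (r:ℝ)⁻¹) = (r:ℝ)⁻¹ ^ 3
        simp), Finset.sum_const, hcard, nsmul_eq_mul]
      field_simp
    · -- other colors vanish
      intro i _ hi
      unfold embDensity
      convert Finset.sum_empty with φ
      rw [Finset.filter_eq_empty_iff]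
      intro φ _
      intro h
      by_cases hcase : ∃ u v : Fin 3, u ≠ v ∧ φ u = φ v
      · obtain ⟨u, v, huv, he⟩ := hcase
        have h1 := h u v huv
        rw [monoK] at h1
        rw [he, hloop] at h1
        exact hi h1.symm
      · push_neg at hcase
        have h01 : φ 0 ≠ φ 1 := hcase 0 1 (by decide)
        have h02 : φ 0 ≠ φ 2 := hcase 0 2 (by decide)
        have h12 : φ 1 ≠ φ 2 := hcase 1 2 (by decide)
        have e01 := h 0 1 (by decide)
        have e02 := h 0 2 (by decide)
        have e12 := h 1 2 (by decide)
        rw [monoK] at e01 e02 e12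
        exact htri (φ 0) (φ 1) (φ 2) h01 h02 h12 ⟨e01.trans e02.symm, e02.trans e12.symm⟩
    · intro h; exact absurd (mem_univ cℓ) h
  · intro L hL
    have key : ∀ m : ℕ, 3 ≤ m → mcn c 3 (r*m) ≤ ((r:ℝ)⁻¹)^2 := by
      intro m hm
      set f : Fin (r*m) → Fin r := fun v => (finProdFinEquiv.symm v).1 with hf
      set G : Sym2 (Fin (r*m)) → Fin c := fun e => C (Sym2.map f e) with hG
      have hmap : ∀ a b : Fin (r*m), G s(a,b) = C s(f a, f b) := by
        intro a b; simp [hG]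
      have hbdd : BddBelow (Set.range fun G' : Sym2 (Fin (r*m)) → Fin c =>
          totalMonoDensity (r*m) c 3 G') := by
        refine ⟨0, ?_⟩
        rintro x ⟨G', rfl⟩
        exact Finset.sum_nonneg fun col _ => monoDensity_nonneg _ _ _ _ _
      have hinf : mcn c 3 (r*m) ≤ totalMonoDensity (r*m) c 3 G := ciInf_le hbdd G
      refine hinf.trans ?_
      have hz : ∀ col : Fin c, col ≠ cℓ → monoDensity (r*m) c 3 col G = 0 := by
        intro col hcol
        unfold monoDensity
        rw [Finset.filter_eq_empty_iff.2, Finset.card_empty]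
        · norm_num
        intro T hT hmono
        rw [Finset.mem_powersetCard] at hT
        obtain ⟨a, b, d, hab, had, hbd, rfl⟩ := Finset.card_eq_three.1 hT.2
        have ma : a ∈ ({a,b,d} : Finset _) := by simp
        have mb : b ∈ ({a,b,d} : Finset _) := by simp
        have md : d ∈ ({a,b,d} : Finset _) := by simp
        have eab := hmono a ma b mb hab
        have ead := hmono a ma d md had
        have ebd := hmono b mb d md hbd
        rw [hmap] at eab ead ebd
        have fab : f a ≠ f b := by
          intro h; rw [h, hloop] at eab; exact hcol eab.symm
        have fad : f a ≠ f d := by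
          intro h; rw [h, hloop] at ead; exact hcol ead.symm
        have fbd : f b ≠ f d := by
          intro h; rw [h, hloop] at ebd; exact hcol ebd.symm
        exact htri (f a) (f b) (f d) fab fad fbd ⟨eab.trans ead.symm, ead.trans ebd.symm⟩
      have htot : totalMonoDensity (r*m) c 3 G = monoDensity (r*m) c 3 cℓ G := by
        unfold totalMonoDensity
        rw [Finset.sum_eq_single cℓ (fun col _ h => hz col h)
          (fun h => absurd (mem_univ cℓ) h)]
      rw [htot]
      unfold monoDensity
      have hfiber : ∀ i : Fin r, ((univ : Finset (Fin (r*m))).filter (fun v => f v = i)).card ≤ m := by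
        intro i
        have h : ((univ : Finset (Fin (r*m))).filter (fun v => f v = i)).card
            ≤ (univ : Finset (Fin m)).card :=
          Finset.card_le_card_of_injOn (fun v => (finProdFinEquiv.symm v).2)
            (fun x _ => mem_univ _)
            (fun a ha b hb hab => finProdFinEquiv.symm.injective
              (Prod.ext ((mem_filter.1 ha).2.trans (mem_filter.1 hb).2.symm) hab))
        simpa using h
      set A := ((Finset.powersetCard 3 (univ : Finset (Fin (r*m)))).filter
        (fun T => ∀ i ∈ T, ∀ j ∈ T, i ≠ j → G s(i, j) = cℓ)) with hA
      have hsub : A ⊆ (univ : Finset (Fin r)).biUnion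
          (fun i => Finset.powersetCard 3 (univ.filter (fun v => f v = i))) := by
        intro T hT
        rw [hA, mem_filter] at hT
        obtain ⟨hT1, hmono⟩ := hT
        rw [Finset.mem_powersetCard] at hT1
        have hne : T.Nonempty := Finset.card_pos.1 (by rw [hT1.2]; norm_num)
        obtain ⟨a, ha⟩ := hne
        refine Finset.mem_biUnion.2 ⟨f a, mem_univ _, Finset.mem_powersetCard.2 ⟨?_, hT1.2⟩⟩
        intro b hb
        rw [mem_filter]
        refine ⟨mem_univ _, ?_⟩
        by_cases hba : b = a
        · rw [hba]
        · have hcol := hmono b hb a ha hba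
          rw [hmap] at hcol
          by_contra hne'
          exact hedge _ _ hne' hcol
      have hcard : A.card ≤ r * m.choose 3 := by
        refine (Finset.card_le_card hsub).trans ?_
        refine (Finset.card_biUnion_le).trans ?_
        calc ∑ i : Fin r, (Finset.powersetCard 3 ((univ : Finset (Fin (r*m))).filter (fun v => f v = i))).card
            ≤ ∑ _i : Fin r, m.choose 3 := Finset.sum_le_sum (fun i _ => by
              rw [Finset.card_powersetCard]; exact Nat.choose_le_choose 3 (hfiber i))
          _ = r * m.choose 3 := by
              rw [Finset.sum_const, card_univ, Fintype.card_fin, smul_eq_mul]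
      have hpos : 0 < (r*m).choose 3 :=
        Nat.choose_pos (le_trans hm (Nat.le_mul_of_pos_left m (by omega)))
      have hposR : (0:ℝ) < (((r*m).choose 3 : ℕ) : ℝ) := by exact_mod_cast hpos
      rw [div_le_iff₀ hposR]
      have h3 : (r:ℝ)^3 * ((m.choose 3 : ℕ) : ℝ) ≤ (((r*m).choose 3 : ℕ) : ℝ) := by
        exact_mod_cast choose3_mul r m hr hm
      have hrR : (0:ℝ) < r := by exact_mod_cast Nat.lt_of_lt_of_le Nat.zero_lt_one hr
      calc (A.card : ℝ) ≤ (r : ℝ) * ((m.choose 3 : ℕ) : ℝ) := by exact_mod_cast hcard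
        _ = (r:ℝ)⁻¹^2 * ((r:ℝ)^3 * ((m.choose 3 : ℕ) : ℝ)) := by
            field_simp
        _ ≤ (r:ℝ)⁻¹^2 * (((r*m).choose 3 : ℕ) : ℝ) :=
            mul_le_mul_of_nonneg_left h3 (by positivity)
    have h2 : Tendsto (fun m => mcn c 3 (r*m)) atTop (nhds L) :=
      hL.comp (tendsto_atTop_mono (fun m => Nat.le_mul_of_pos_left m (by omega)) tendsto_id)
    exact le_of_tendsto h2 (eventually_atTop.2 ⟨3, key⟩)
end

section
/- Let C be a looped c-edge-coloring on k vertices and w a probability vector on its vertices. Then m_c(t) ≤ Σ_{i∈[c]} p̂(K_t^i; C, w), where p̂ denotes the w-weighted embedding density and K_t^i is the monochromatic t-clique in color i. -/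
open Finset Filter Topology

attribute [local instance] Classical.propDecidable

lemma aux_floor_tendsto (a : ℝ) (ha : 0 ≤ a) :
    Tendsto (fun n : ℕ => (⌊(n:ℝ)*a⌋₊ : ℝ)/n) atTop (nhds a) := by
  have hlow : Tendsto (fun n : ℕ => a - 1/(n:ℝ)) atTop (nhds a) := by
    have : Tendsto (fun n : ℕ => 1/(n:ℝ)) atTop (nhds 0) := tendsto_one_div_atTop_nhds_zero_nat
    simpa using (tendsto_const_nhds (x := a)).sub this
  have hhigh : Tendsto (fun _ : ℕ => a) atTop (nhds a) := tendsto_const_nhds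
  apply tendsto_of_tendsto_of_tendsto_of_le_of_le' hlow hhigh
  · filter_upwards [eventually_ge_atTop 1] with n hn
    have hn0 : (0:ℝ) < n := by exact_mod_cast hn
    rw [sub_le_iff_le_add, ← add_div, le_div_iff₀ hn0]
    have h1 : (n:ℝ)*a - 1 < ⌊(n:ℝ)*a⌋₊ := Nat.sub_one_lt_floor _
    nlinarith
  · filter_upwards [eventually_ge_atTop 1] with n hn
    have hn0 : (0:ℝ) < n := by exact_mod_cast hn
    rw [div_le_iff₀ hn0]
    have := Nat.floor_le (by positivity : (0:ℝ) ≤ (n:ℝ)*a)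
    linarith

lemma aux_ratio_tendsto (t : ℕ) :
    Tendsto (fun n : ℕ => ((n:ℝ)^t)/(((Nat.factorial t) : ℝ) * (n.choose t))) atTop (nhds 1) := by
  have hfac : ∀ j : ℕ, Tendsto (fun n : ℕ => (n:ℝ)/((n:ℝ)-(j:ℝ))) atTop (nhds 1) := by
    intro j
    have hsub : Tendsto (fun n : ℕ => (n:ℝ) - (j:ℝ)) atTop atTop :=
      tendsto_atTop_add_const_right _ (-(j:ℝ)) tendsto_natCast_atTop_atTop
    have h0 : Tendsto (fun n : ℕ => (j:ℝ)/((n:ℝ)-(j:ℝ))) atTop (nhds 0) :=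
      Tendsto.div_atTop tendsto_const_nhds hsub
    have h1 : Tendsto (fun n : ℕ => 1 + (j:ℝ)/((n:ℝ)-(j:ℝ))) atTop (nhds 1) := by
      simpa using (tendsto_const_nhds (x := (1:ℝ))).add h0
    apply h1.congr'
    filter_upwards [eventually_gt_atTop j] with n hn
    have : (n:ℝ) - (j:ℝ) ≠ 0 := by
      have : (j:ℝ) < n := by exact_mod_cast hn
      linarith
    field_simp
    ring
  have hprod : Tendsto (fun n : ℕ => ∏ j ∈ range t, (n:ℝ)/((n:ℝ)-(j:ℝ))) atTop (nhds 1) := by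
    have := tendsto_finset_prod (range t) (fun j _ => hfac j)
    simpa using this
  apply hprod.congr'
  filter_upwards [eventually_ge_atTop t] with n hn
  have hdesc : ((Nat.factorial t) : ℝ) * (n.choose t) = ∏ j ∈ range t, ((n:ℝ) - (j:ℝ)) := by
    have h1 : n.descFactorial t = (Nat.factorial t) * n.choose t := Nat.descFactorial_eq_factorial_mul_choose n t
    have h2 : n.descFactorial t = ∏ j ∈ range t, (n - j) := Nat.descFactorial_eq_prod_range n t
    have : ((∏ j ∈ range t, (n - j) : ℕ) : ℝ) = ∏ j ∈ range t, ((n:ℝ) - (j:ℝ)) := by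
      push_cast
      refine Finset.prod_congr rfl fun j hj => ?_
      have hj' : j ≤ n := le_trans (le_of_lt (mem_range.mp hj)) hn
      push_cast [Nat.cast_sub hj']
      ring
    calc ((Nat.factorial t) : ℝ) * (n.choose t) = (((Nat.factorial t) * n.choose t : ℕ) : ℝ) := by push_cast; ring
      _ = ((n.descFactorial t : ℕ) : ℝ) := by rw [h1]
      _ = _ := by rw [h2]; exact this
  rw [hdesc, Finset.prod_div_distrib]
  congr 1
  simp


/-- fiber of Sigma.fst -/
def sigmaFstFiber {α : Type*} {β : α → Type*} (x : α) : {p : Σ y, β y // p.1 = x} ≃ β x where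
  toFun p := cast (congrArg β p.2) p.1.2
  invFun b := ⟨⟨x, b⟩, rfl⟩
  left_inv := by rintro ⟨⟨y, b⟩, rfl⟩; rfl
  right_inv := by intro b; rfl

lemma aux_fiber_card' {n k : ℕ} (m : Fin k → ℕ) (e : (Σ x : Fin k, Fin (m x)) ≃ Fin n)
    (x : Fin k) :
    ((univ : Finset (Fin n)).filter (fun a => (e.symm a).1 = x)).card = m x := by
  have h1 : ((univ : Finset (Fin n)).filter (fun a => (e.symm a).1 = x)).card
      = Fintype.card {a : Fin n // (e.symm a).1 = x} := (Fintype.card_subtype _).symm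
  rw [h1]
  have e2 : {a : Fin n // (e.symm a).1 = x} ≃ {p : Σ y : Fin k, Fin (m y) // p.1 = x} :=
    e.symm.subtypeEquiv (fun a => Iff.rfl)
  rw [Fintype.card_congr (e2.trans (sigmaFstFiber x)), Fintype.card_fin]

lemma aux_pi_card {n k t : ℕ} (π : Fin n → Fin k) (φ : Fin t → Fin k) :
    ((univ : Finset (Fin t → Fin n)).filter (fun f => π ∘ f = φ)).card
      = ∏ v : Fin t, ((univ : Finset (Fin n)).filter (fun a => π a = φ v)).card := by
  rw [← Fintype.card_piFinset]
  congr 1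
  ext f
  simp [funext_iff, Fintype.mem_piFinset, Function.comp]



variable {n k t c : ℕ} (C : Sym2 (Fin k) → Fin c) (π : Fin n → Fin k) (i : Fin c)

lemma aux_cardA :
    ((univ : Finset (Fin t → Fin n)).filter
        (fun f => ∀ u v : Fin t, u ≠ v → C s(π (f u), π (f v)) = i)).card
      = ∑ φ ∈ (univ : Finset (Fin t → Fin k)).filter
            (fun φ => ∀ u v : Fin t, u ≠ v → C s(φ u, φ v) = i),
          ∏ v : Fin t, ((univ : Finset (Fin n)).filter (fun a => π a = φ v)).card := by
  rw [Finset.card_eq_sum_card_fiberwise (f := fun f => π ∘ f)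
    (t := (univ : Finset (Fin t → Fin k)).filter
      (fun φ => ∀ u v : Fin t, u ≠ v → C s(φ u, φ v) = i))]
  · refine Finset.sum_congr rfl fun φ hφ => ?_
    rw [← aux_pi_card π φ]
    congr 1
    ext f
    simp only [mem_filter, mem_univ, true_and, Finset.filter_filter]
    constructor
    · rintro ⟨-, h2⟩; exact h2
    · intro h2
      refine ⟨fun u v huv => ?_, h2⟩
      have := congrFun h2
      simp only [Function.comp] at this
      rw [this u, this v]
      exact (mem_filter.mp hφ).2 u v huv
  · intro f hf
    simp only [Finset.mem_coe, mem_filter, mem_univ, true_and] at hf ⊢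
    intro u v huv
    exact hf u v huv

lemma aux_mono_le :
    (Nat.factorial t) *
      (((Finset.powersetCard t (univ : Finset (Fin n))).filter
        (fun T => ∀ a ∈ T, ∀ b ∈ T, a ≠ b → C s(π a, π b) = i)).card)
      ≤ ((univ : Finset (Fin t → Fin n)).filter
        (fun f => ∀ u v : Fin t, u ≠ v → C s(π (f u), π (f v)) = i)).card := by
  classical
  set A := (univ : Finset (Fin t → Fin n)).filter
      (fun f => ∀ u v : Fin t, u ≠ v → C s(π (f u), π (f v)) = i) with hA
  set M := (Finset.powersetCard t (univ : Finset (Fin n))).filter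
      (fun T => ∀ a ∈ T, ∀ b ∈ T, a ≠ b → C s(π a, π b) = i) with hM
  set A' := A.filter (fun f => Finset.image f univ ∈ M) with hA'
  have key : (Nat.factorial t) * M.card ≤ A'.card := by
    apply Finset.mul_card_image_le_card_of_maps_to
      (f := fun f => Finset.image f univ) (t := M)
    · intro f hf
      exact (mem_filter.mp hf).2
    · intro T hT
      -- build t! injective functions with image T
      have hTcard : T.card = t := by
        have := (mem_filter.mp hT).1
        exact (Finset.mem_powersetCard.mp this).2
      have hTmono := (mem_filter.mp hT).2
      have e : Fin t ≃ {x // x ∈ T} := (T.equivFin.trans (finCongr hTcard)).symm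
      have hinj : Function.Injective (fun σ : Equiv.Perm (Fin t) =>
          (fun v => (e (σ v) : Fin n) : Fin t → Fin n)) := by
        intro σ σ' h
        apply Equiv.ext; intro v
        have := congrFun h v
        simp only at this
        exact e.injective (Subtype.coe_injective this)
      calc Nat.factorial t = Fintype.card (Equiv.Perm (Fin t)) := by
            rw [Fintype.card_perm, Fintype.card_fin]
        _ = (univ : Finset (Equiv.Perm (Fin t))).card := rfl
        _ ≤ _ := by
            apply Finset.card_le_card_of_injOn
              (fun σ => (fun v => (e (σ v) : Fin n)))
            · intro σ _
              have hfinj : Function.Injective (fun v => (e (σ v) : Fin n)) :=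
                Subtype.coe_injective.comp (e.injective.comp σ.injective)
              have himg : Finset.image (fun v => (e (σ v) : Fin n)) univ = T := by
                apply Finset.eq_of_subset_of_card_le
                · intro x hx
                  simp only [Finset.mem_image] at hx
                  obtain ⟨v, -, rfl⟩ := hx
                  exact (e (σ v)).2
                · rw [hTcard, Finset.card_image_of_injective _ hfinj, card_univ,
                    Fintype.card_fin]
              rw [Finset.mem_coe, Finset.mem_filter]
              refine ⟨?_, himg⟩
              rw [hA', Finset.mem_filter]
              refine ⟨?_, by rw [himg]; exact hT⟩
              rw [hA, Finset.mem_filter]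
              refine ⟨Finset.mem_univ _, fun u v huv => ?_⟩
              apply hTmono
              · exact (e (σ u)).2
              · exact (e (σ v)).2
              · exact fun hh => huv (σ.injective (e.injective (Subtype.coe_injective hh)))
            · exact fun σ _ σ' _ h => hinj h
  calc (Nat.factorial t) * M.card ≤ A'.card := key
    _ ≤ A.card := Finset.card_le_card (Finset.filter_subset _ _)


variable {k : ℕ} (w : Fin k → ℝ)

/-- cumulative weight -/
noncomputable def cw (j : ℕ) : ℝ :=
  ∑ y ∈ (univ : Finset (Fin k)).filter (fun y : Fin k => (y : ℕ) < j), w y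

lemma cw_zero : cw w 0 = 0 := by simp [cw]

lemma cw_k (hw1 : (∑ v, w v) = 1) : cw w k = 1 := by
  rw [← hw1]; unfold cw; congr 1; ext y; simp [y.2]

lemma cw_mono (hw : ∀ v, 0 ≤ w v) : Monotone (cw w) := by
  intro a b hab
  apply Finset.sum_le_sum_of_subset_of_nonneg
  · intro y hy
    simp only [mem_filter, mem_univ, true_and] at hy ⊢
    omega
  · exact fun y _ _ => hw y

lemma cw_nonneg (hw : ∀ v, 0 ≤ w v) (j : ℕ) : 0 ≤ cw w j :=
  Finset.sum_nonneg fun y _ => hw y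

lemma cw_succ (x : Fin k) : cw w ((x : ℕ) + 1) = cw w (x : ℕ) + w x := by
  unfold cw
  have h : (univ : Finset (Fin k)).filter (fun y : Fin k => (y : ℕ) < (x : ℕ) + 1)
      = insert x ((univ : Finset (Fin k)).filter (fun y : Fin k => (y : ℕ) < (x : ℕ))) := by
    ext y
    simp only [mem_filter, mem_univ, true_and, mem_insert]
    constructor
    · intro h
      rcases Nat.lt_succ_iff_lt_or_eq.mp h with h | h
      · exact Or.inr h
      · exact Or.inl (Fin.ext h)
    · rintro (rfl | h)
      · omega
      · omega
  rw [h, Finset.sum_insert (by simp)]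
  ring

/-- part sizes -/
noncomputable def mpart (n : ℕ) (x : Fin k) : ℕ :=
  ⌊(n:ℝ) * cw w ((x:ℕ)+1)⌋₊ - ⌊(n:ℝ) * cw w (x:ℕ)⌋₊

lemma mpart_le (hw : ∀ v, 0 ≤ w v) (n : ℕ) (x : Fin k) :
    ⌊(n:ℝ) * cw w (x:ℕ)⌋₊ ≤ ⌊(n:ℝ) * cw w ((x:ℕ)+1)⌋₊ :=
  Nat.floor_mono (by
    apply mul_le_mul_of_nonneg_left (cw_mono w hw (Nat.le_succ _)) (by positivity))

lemma mpart_sum (hw : ∀ v, 0 ≤ w v) (hw1 : (∑ v, w v) = 1) (n : ℕ) :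
    ∑ x : Fin k, mpart w n x = n := by
  have h1 : ∑ x : Fin k, mpart w n x
      = ∑ j ∈ range k, (⌊(n:ℝ) * cw w (j+1)⌋₊ - ⌊(n:ℝ) * cw w j⌋₊) := by
    rw [Finset.sum_range fun j => (⌊(n:ℝ) * cw w (j+1)⌋₊ - ⌊(n:ℝ) * cw w j⌋₊)]
    rfl
  rw [h1, Finset.sum_range_tsub (f := fun j => ⌊(n:ℝ) * cw w j⌋₊)]
  · rw [cw_zero, cw_k w hw1]
    simp
  · intro a b hab
    exact Nat.floor_mono (mul_le_mul_of_nonneg_left (cw_mono w hw hab) (by positivity))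

lemma mpart_tendsto (hw : ∀ v, 0 ≤ w v) (x : Fin k) :
    Tendsto (fun n : ℕ => (mpart w n x : ℝ)/n) atTop (nhds (w x)) := by
  have hle := mpart_le w hw
  have hcast : ∀ n : ℕ, (mpart w n x : ℝ)
      = (⌊(n:ℝ) * cw w ((x:ℕ)+1)⌋₊ : ℝ) - (⌊(n:ℝ) * cw w (x:ℕ)⌋₊ : ℝ) := by
    intro n
    unfold mpart
    rw [Nat.cast_sub (hle n x)]
  have h1 := aux_floor_tendsto (cw w ((x:ℕ)+1)) (cw_nonneg w hw _)
  have h2 := aux_floor_tendsto (cw w (x:ℕ)) (cw_nonneg w hw _)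
  have h3 := h1.sub h2
  rw [show cw w ((x:ℕ)+1) - cw w (x:ℕ) = w x by rw [cw_succ]; ring] at h3
  apply h3.congr
  intro n
  rw [hcast n, sub_div]


lemma aux_total_nonneg (n c t : ℕ) (G : Sym2 (Fin n) → Fin c) :
    0 ≤ totalMonoDensity n c t G := by
  apply Finset.sum_nonneg
  intro i _
  unfold monoDensity
  positivity

/-- Lemma (blow-up bound): for any looped `c`-coloring `C` on `k` vertices and any
probability vector `w`, `m_c(t) ≤ Σ_i p̂(K_t^i; C, w)`. -/
theorem blowup_upper_bound (c t k : ℕ) (hc : 1 ≤ c)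
    (C : Sym2 (Fin k) → Fin c) (w : Fin k → ℝ)
    (hw : ∀ v, 0 ≤ w v) (hw1 : (∑ v, w v) = 1) (L : ℝ)
    (hL : Tendsto (fun n => mcn c t n) atTop (nhds L)) :
    L ≤ ∑ i : Fin c, embDensity (monoK c t i) C w := by
  classical
  -- blow-up construction
  have hcard : ∀ n : ℕ, Fintype.card (Σ x : Fin k, Fin (mpart w n x)) = n := by
    intro n
    simp [Fintype.card_sigma, mpart_sum w hw hw1 n]
  let e : ∀ n, (Σ x : Fin k, Fin (mpart w n x)) ≃ Fin n :=
    fun n => Fintype.equivFinOfCardEq (hcard n)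
  let π : ∀ n, Fin n → Fin k := fun n a => ((e n).symm a).1
  have hfib : ∀ n (x : Fin k),
      ((univ : Finset (Fin n)).filter (fun a => π n a = x)).card = mpart w n x :=
    fun n x => aux_fiber_card' _ (e n) x
  let G : ∀ n, Sym2 (Fin n) → Fin c := fun n s => C (Sym2.map (π n) s)
  -- admissible maps (independent of n)
  let adm : Fin c → Finset (Fin t → Fin k) := fun i =>
    (univ : Finset (Fin t → Fin k)).filter
      (fun φ => ∀ u v : Fin t, u ≠ v → C s(φ u, φ v) = i)
  -- the upper bound sequence
  let F : ℕ → ℝ := fun n => ∑ i : Fin c, ∑ φ ∈ adm i,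
      (∏ v : Fin t, (mpart w n (φ v) : ℝ)) / ((Nat.factorial t : ℝ) * (n.choose t))
  -- step 1 : mcn ≤ totalMonoDensity of blow-up
  have h1 : ∀ n, mcn c t n ≤ totalMonoDensity n c t (G n) := by
    intro n
    apply ciInf_le
    exact ⟨0, by rintro x ⟨G', rfl⟩; exact aux_total_nonneg n c t G'⟩
  -- step 2 : totalMonoDensity ≤ F n
  have h2 : ∀ n, totalMonoDensity n c t (G n) ≤ F n := by
    intro n
    apply Finset.sum_le_sum
    intro i _
    -- rewrite the mono clique predicate through the blow-up
    have hpred : ((Finset.powersetCard t (univ : Finset (Fin n))).filter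
          (fun T => ∀ a ∈ T, ∀ b ∈ T, a ≠ b → G n s(a, b) = i))
        = ((Finset.powersetCard t (univ : Finset (Fin n))).filter
          (fun T => ∀ a ∈ T, ∀ b ∈ T, a ≠ b → C s(π n a, π n b) = i)) := by
      apply Finset.filter_congr
      intro T _
      constructor
      · intro h a ha b hb hab
        have := h a ha b hb hab
        simpa [G, Sym2.map_pair_eq] using this
      · intro h a ha b hb hab
        have := h a ha b hb hab
        simpa [G, Sym2.map_pair_eq] using this
    have hnat : (Nat.factorial t) *
        (((Finset.powersetCard t (univ : Finset (Fin n))).filter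
          (fun T => ∀ a ∈ T, ∀ b ∈ T, a ≠ b → C s(π n a, π n b) = i)).card)
        ≤ ∑ φ ∈ adm i, ∏ v : Fin t, mpart w n (φ v) := by
      calc _ ≤ ((univ : Finset (Fin t → Fin n)).filter
            (fun f => ∀ u v : Fin t, u ≠ v → C s(π n (f u), π n (f v)) = i)).card :=
              aux_mono_le C (π n) i
        _ = ∑ φ ∈ adm i, ∏ v : Fin t,
              ((univ : Finset (Fin n)).filter (fun a => π n a = φ v)).card :=
              aux_cardA C (π n) i
        _ = _ := by
              refine Finset.sum_congr rfl fun φ _ => ?_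
              refine Finset.prod_congr rfl fun v _ => ?_
              rw [hfib]
    -- convert to reals
    unfold monoDensity
    rw [hpred, ← Finset.sum_div]
    rcases Nat.eq_zero_or_pos (n.choose t) with hch | hch
    · rw [hch]
      simp
    · have hchR : (0:ℝ) < (n.choose t : ℝ) := by exact_mod_cast hch
      have htR : (0:ℝ) < (Nat.factorial t : ℝ) := by
        exact_mod_cast Nat.factorial_pos t
      rw [div_le_div_iff₀ hchR (by positivity)]
      have hcast : ((Nat.factorial t : ℝ)) *
          ((((Finset.powersetCard t (univ : Finset (Fin n))).filter
            (fun T => ∀ a ∈ T, ∀ b ∈ T, a ≠ b → C s(π n a, π n b) = i)).card : ℝ))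
          ≤ ∑ φ ∈ adm i, ∏ v : Fin t, (mpart w n (φ v) : ℝ) := by
        have := hnat
        calc ((Nat.factorial t : ℝ)) * _ = (((Nat.factorial t) *
              (((Finset.powersetCard t (univ : Finset (Fin n))).filter
                (fun T => ∀ a ∈ T, ∀ b ∈ T, a ≠ b → C s(π n a, π n b) = i)).card) : ℕ) : ℝ) := by
                push_cast; ring
          _ ≤ ((∑ φ ∈ adm i, ∏ v : Fin t, mpart w n (φ v) : ℕ) : ℝ) := by
                exact_mod_cast this
          _ = _ := by push_cast; ring
      nlinarith
  -- step 3 : F tends to the embedding density sum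
  have h3 : Tendsto F atTop
      (nhds (∑ i : Fin c, ∑ φ ∈ adm i, ∏ v : Fin t, w (φ v))) := by
    apply tendsto_finset_sum
    intro i _
    apply tendsto_finset_sum
    intro φ _
    have hprod : Tendsto (fun n : ℕ => ∏ v : Fin t, (mpart w n (φ v) : ℝ)/(n:ℝ))
        atTop (nhds (∏ v : Fin t, w (φ v))) :=
      tendsto_finset_prod _ (fun v _ => mpart_tendsto w hw (φ v))
    have hmul := hprod.mul (aux_ratio_tendsto t)
    rw [mul_one] at hmul
    apply hmul.congr'
    filter_upwards [eventually_ge_atTop 1] with n hn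
    have hn0 : ((n:ℝ))^t ≠ 0 := by
      have : (0:ℝ) < n := by exact_mod_cast hn
      positivity
    rw [Finset.prod_div_distrib, Finset.prod_const, card_univ, Fintype.card_fin,
      div_mul_div_comm]
    rw [mul_comm (∏ v : Fin t, (mpart w n (φ v) : ℝ)) ((n:ℝ)^t),
      mul_div_mul_left _ _ hn0]
  -- identify the limit with the RHS
  have hRHS : (∑ i : Fin c, ∑ φ ∈ adm i, ∏ v : Fin t, w (φ v))
      = ∑ i : Fin c, embDensity (monoK c t i) C w := by
    refine Finset.sum_congr rfl fun i _ => ?_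
    unfold embDensity
    congr 1
  rw [← hRHS]
  exact le_of_tendsto_of_tendsto' hL h3 (fun n => (h1 n).trans (h2 n))
end

section
/- Goodman's bound via sum-of-squares: for every 2-coloring G of the edges of K_n, the sum over vertices v of (r(v) − b(v))² equals a nonnegative quantity which, via double counting, yields that the number of monochromatic triangles is at least C(n,3)/4 − O(n²), where r(v) and b(v) denote the number of red and blue edges at v. -/
open Finset

attribute [local instance] Classical.propDecidable

/-- The number of edges of color `col` at vertex `v`. -/
noncomputable def degCol (n : ℕ) (G : Sym2 (Fin n) → Fin 2) (col : Fin 2) (v : Fin n) : ℕ :=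
  ((univ : Finset (Fin n)).filter (fun w => w ≠ v ∧ G s(v, w) = col)).card

lemma fin2 (x : Fin 2) : x = 0 ∨ x = 1 := by revert x; decide

lemma two_c2 (n : ℕ) : 2 * n.choose 2 = n * (n - 1) := by
  induction n with
  | zero => rfl
  | succ m ih =>
    rw [Nat.choose_succ_succ, Nat.choose_one_right]
    cases m with
    | zero => rfl
    | succ k =>
      simp only [Nat.succ_sub_one, Nat.succ_sub_succ, Nat.sub_zero] at *
      nlinarith [ih]

lemma six_c3 (n : ℕ) : 6 * n.choose 3 = n * (n - 1) * (n - 2) := by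
  induction n with
  | zero => rfl
  | succ m ih =>
    rw [Nat.choose_succ_succ]
    cases m with
    | zero => rfl
    | succ k =>
      have h2 := two_c2 (k+1)
      cases k with
      | zero => rfl
      | succ j =>
        simp only [Nat.succ_sub_one, Nat.succ_sub_succ, Nat.sub_zero] at *
        nlinarith [ih, h2]

set_option maxHeartbeats 1000000 in
/-- Goodman's bound via sum-of-squares: `Σ_v (r(v) - b(v))²` is nonnegative, and by double
counting the number of monochromatic triangles is at least `C(n,3)/4 - O(n²)`. -/
theorem goodman_sos (n : ℕ) (G : Sym2 (Fin n) → Fin 2) :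
    (0 ≤ ∑ v : Fin n, ((degCol n G 0 v : ℝ) - (degCol n G 1 v : ℝ)) ^ 2) ∧
    ((monoTriCount n G : ℝ) ≥ (n.choose 3 : ℝ) / 4 - (n : ℝ) ^ 2) := by
  refine ⟨by positivity, ?_⟩
  by_cases hn2 : n < 2
  · have hc0 : (n.choose 3 : ℝ) = 0 := by
      have : n.choose 3 = 0 := Nat.choose_eq_zero_of_lt (by omega)
      exact_mod_cast this
    rw [ge_iff_le, hc0]
    have h1 := Nat.cast_nonneg (α := ℝ) (monoTriCount n G)
    nlinarith [sq_nonneg ((n : ℝ))]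
  push_neg at hn2
  set P : Finset (Fin n × Fin n × Fin n) :=
    univ.filter (fun p => p.1 ≠ p.2.1 ∧ p.1 ≠ p.2.2 ∧ p.2.1 ≠ p.2.2 ∧
      G s(p.1, p.2.1) = 0 ∧ G s(p.1, p.2.2) = 1) with hP
  set N := (powersetCard 3 (univ : Finset (Fin n))).filter
    (fun T => ¬ ∃ col : Fin 2, ∀ i ∈ T, ∀ j ∈ T, i ≠ j → G s(i, j) = col) with hN
  have hMN : monoTriCount n G + N.card = n.choose 3 := by
    rw [monoTriCount, hN, Finset.card_filter_add_card_filter_not,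
      Finset.card_powersetCard]
    simp
  -- Claim A : 2 * N.card ≤ P.card
  have hfib : ∀ p ∈ P, ({p.1, p.2.1, p.2.2} : Finset (Fin n)) ∈
      powersetCard 3 (univ : Finset (Fin n)) := by
    intro p hp
    simp only [hP, Finset.mem_filter, Finset.mem_univ, true_and] at hp
    obtain ⟨h12, h13, h23, -, -⟩ := hp
    rw [Finset.mem_powersetCard_univ]
    rw [Finset.card_insert_of_notMem (by simp [h12, h13]),
      Finset.card_insert_of_notMem (by simp [h23]), Finset.card_singleton]
  have hPcard := Finset.card_eq_sum_card_fiberwise hfib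
  have hTge : ∀ T ∈ N,
      2 ≤ (P.filter (fun p => ({p.1, p.2.1, p.2.2} : Finset (Fin n)) = T)).card := by
    intro T hT
    simp only [hN, Finset.mem_filter] at hT
    obtain ⟨hT3, hnm⟩ := hT
    rw [Finset.mem_powersetCard_univ] at hT3
    obtain ⟨a, b, c, hab, hac, hbc, rfl⟩ := Finset.card_eq_three.mp hT3
    have hmem : ∀ v w x : Fin n, v ≠ w → v ≠ x → w ≠ x →
        ({v, w, x} : Finset (Fin n)) = {a, b, c} → G s(v, w) = 0 → G s(v, x) = 1 →
        (v, w, x) ∈ P.filter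
          (fun p => ({p.1, p.2.1, p.2.2} : Finset (Fin n)) = ({a, b, c} : Finset (Fin n))) := by
      intro v w x hvw hvx hwx hset h0 h1
      simp only [hP, Finset.mem_filter, Finset.mem_univ, true_and]
      exact ⟨⟨hvw, hvx, hwx, h0, h1⟩, hset⟩
    have hnm' : ¬ (G s(a, c) = G s(a, b) ∧ G s(b, c) = G s(a, b)) := by
      rintro ⟨h2, h3⟩
      refine hnm ⟨G s(a, b), ?_⟩
      intro i hi j hj hij
      simp only [Finset.mem_insert, Finset.mem_singleton] at hi hj
      rcases hi with rfl | rfl | rfl <;> rcases hj with rfl | rfl | rfl <;>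
        first
          | exact absurd rfl hij
          | rfl
          | assumption
          | (rw [Sym2.eq_swap]; try assumption)
    have seq1 : ({b, a, c} : Finset (Fin n)) = {a, b, c} := by ext y; simp; tauto
    have seq2 : ({c, a, b} : Finset (Fin n)) = {a, b, c} := by ext y; simp; tauto
    have seq3 : ({c, b, a} : Finset (Fin n)) = {a, b, c} := by ext y; simp; tauto
    have seq4 : ({a, c, b} : Finset (Fin n)) = {a, b, c} := by ext y; simp; tauto
    have seq5 : ({b, c, a} : Finset (Fin n)) = {a, b, c} := by ext y; simp; tauto
    rcases fin2 (G s(a, b)) with h1 | h1 <;> rcases fin2 (G s(a, c)) with h2 | h2 <;>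
      rcases fin2 (G s(b, c)) with h3 | h3
    · exact absurd ⟨h2.trans h1.symm, h3.trans h1.symm⟩ hnm'
    · -- (0,0,1) : (b,a,c), (c,a,b)
      exact Finset.one_lt_card_iff.mpr ⟨(b, a, c), (c, a, b),
        hmem b a c hab.symm hbc hac seq1 (by rw [Sym2.eq_swap]; exact h1) h3,
        hmem c a b hac.symm hbc.symm hab seq2 (by rw [Sym2.eq_swap]; exact h2)
          (by rw [Sym2.eq_swap]; exact h3),
        by simp [hbc]⟩
    · -- (0,1,0) : (a,b,c), (c,b,a)
      exact Finset.one_lt_card_iff.mpr ⟨(a, b, c), (c, b, a),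
        hmem a b c hab hac hbc rfl h1 h2,
        hmem c b a hbc.symm hac.symm hab.symm seq3 (by rw [Sym2.eq_swap]; exact h3)
          (by rw [Sym2.eq_swap]; exact h2),
        by simp [hac]⟩
    · -- (0,1,1) : (a,b,c), (b,a,c)
      exact Finset.one_lt_card_iff.mpr ⟨(a, b, c), (b, a, c),
        hmem a b c hab hac hbc rfl h1 h2,
        hmem b a c hab.symm hbc hac seq1 (by rw [Sym2.eq_swap]; exact h1) h3,
        by simp [hab]⟩
    · -- (1,0,0) : (a,c,b), (b,c,a)
      exact Finset.one_lt_card_iff.mpr ⟨(a, c, b), (b, c, a),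
        hmem a c b hac hab hbc.symm seq4 h2 h1,
        hmem b c a hbc hab.symm hac.symm seq5 h3 (by rw [Sym2.eq_swap]; exact h1),
        by simp [hab]⟩
    · -- (1,0,1) : (a,c,b), (c,a,b)
      exact Finset.one_lt_card_iff.mpr ⟨(a, c, b), (c, a, b),
        hmem a c b hac hab hbc.symm seq4 h2 h1,
        hmem c a b hac.symm hbc.symm hab seq2 (by rw [Sym2.eq_swap]; exact h2)
          (by rw [Sym2.eq_swap]; exact h3),
        by simp [hac]⟩
    · -- (1,1,0) : (b,c,a), (c,b,a)
      exact Finset.one_lt_card_iff.mpr ⟨(b, c, a), (c, b, a),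
        hmem b c a hbc hab.symm hac.symm seq5 h3 (by rw [Sym2.eq_swap]; exact h1),
        hmem c b a hbc.symm hac.symm hab.symm seq3 (by rw [Sym2.eq_swap]; exact h3)
          (by rw [Sym2.eq_swap]; exact h2),
        by simp [hbc]⟩
    · exact absurd ⟨h2.trans h1.symm, h3.trans h1.symm⟩ hnm'
  have claimA : 2 * N.card ≤ P.card := by
    calc 2 * N.card = ∑ _T ∈ N, 2 := by rw [Finset.sum_const, smul_eq_mul, mul_comm]
      _ ≤ ∑ T ∈ N, (P.filter (fun p => ({p.1, p.2.1, p.2.2} : Finset (Fin n)) = T)).card :=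
          Finset.sum_le_sum hTge
      _ ≤ ∑ T ∈ powersetCard 3 (univ : Finset (Fin n)),
            (P.filter (fun p => ({p.1, p.2.1, p.2.2} : Finset (Fin n)) = T)).card := by
          apply Finset.sum_le_sum_of_subset
          rw [hN]; exact Finset.filter_subset _ _
      _ = P.card := hPcard.symm
  -- Claim B : P.card ≤ ∑ r(v) b(v) pointwise, hence real bound
  have hP2 := Finset.card_eq_sum_card_fiberwise
    (f := fun p : Fin n × Fin n × Fin n => p.1) (s := P) (t := (univ : Finset (Fin n)))
    (fun p _ => Finset.mem_univ _)
  have hfv : ∀ v : Fin n,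
      (P.filter (fun p => p.1 = v)).card ≤ degCol n G 0 v * degCol n G 1 v := by
    intro v
    rw [degCol, degCol, ← Finset.card_product]
    apply Finset.card_le_card_of_injOn (fun p => (p.2.1, p.2.2))
    · intro p hp
      simp only [Finset.mem_coe, hP, Finset.mem_filter, Finset.mem_univ, true_and] at hp
      obtain ⟨⟨h12, h13, h23, hc0, hc1⟩, hv⟩ := hp
      subst hv
      simp only [Finset.mem_coe, Finset.mem_product, Finset.mem_filter, Finset.mem_univ, true_and]
      exact ⟨⟨fun e => h12 e.symm, hc0⟩, ⟨fun e => h13 e.symm, hc1⟩⟩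
    · intro p hp q hq hpq
      simp only [Finset.mem_coe, Finset.mem_filter] at hp hq
      have e1 : p.1 = q.1 := hp.2.trans hq.2.symm
      have e2 : p.2.1 = q.2.1 := congrArg Prod.fst hpq
      have e3 : p.2.2 = q.2.2 := congrArg Prod.snd hpq
      exact Prod.ext e1 (Prod.ext e2 e3)
  have hdegsum : ∀ v : Fin n, degCol n G 0 v + degCol n G 1 v ≤ n - 1 := by
    intro v
    rw [degCol, degCol, ← Finset.card_union_of_disjoint]
    · have hsub : ((univ : Finset (Fin n)).filter (fun w => w ≠ v ∧ G s(v, w) = 0) ∪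
          (univ : Finset (Fin n)).filter (fun w => w ≠ v ∧ G s(v, w) = 1)) ⊆
          (univ : Finset (Fin n)).erase v := by
        intro w hw
        simp only [Finset.mem_union, Finset.mem_filter, Finset.mem_univ, true_and] at hw
        rcases hw with h | h <;> exact Finset.mem_erase.mpr ⟨h.1, Finset.mem_univ _⟩
      calc _ ≤ ((univ : Finset (Fin n)).erase v).card := Finset.card_le_card hsub
        _ = n - 1 := by
          rw [Finset.card_erase_of_mem (Finset.mem_univ _), Finset.card_univ,
            Fintype.card_fin]
    · rw [Finset.disjoint_left]
      intro w h0 h1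
      simp only [Finset.mem_filter, Finset.mem_univ, true_and] at h0 h1
      exact absurd (h0.2.symm.trans h1.2) (by decide)
  have hnn : ∀ v : Fin n,
      ((degCol n G 0 v : ℝ) * (degCol n G 1 v : ℝ)) ≤ (((n : ℝ) - 1) / 2) ^ 2 := by
    intro v
    have h1 : 1 ≤ n := by omega
    have hs := hdegsum v
    have hs' : (degCol n G 0 v : ℝ) + (degCol n G 1 v : ℝ) ≤ (n : ℝ) - 1 := by
      have hcast := (Nat.cast_le (α := ℝ)).mpr hs
      rw [Nat.cast_sub h1] at hcast
      push_cast at hcast ⊢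
      linarith
    nlinarith [sq_nonneg ((degCol n G 0 v : ℝ) - (degCol n G 1 v : ℝ)),
      Nat.cast_nonneg (α := ℝ) (degCol n G 0 v), Nat.cast_nonneg (α := ℝ) (degCol n G 1 v)]
  have claimB : (P.card : ℝ) ≤ (n : ℝ) * (((n : ℝ) - 1) / 2) ^ 2 := by
    rw [hP2]
    push_cast
    calc ∑ v : Fin n, ((P.filter (fun p => p.1 = v)).card : ℝ)
        ≤ ∑ v : Fin n, ((degCol n G 0 v : ℝ) * (degCol n G 1 v : ℝ)) :=
          Finset.sum_le_sum (fun v _ => by exact_mod_cast hfv v)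
      _ ≤ ∑ _v : Fin n, (((n : ℝ) - 1) / 2) ^ 2 := Finset.sum_le_sum (fun v _ => hnn v)
      _ = (n : ℝ) * (((n : ℝ) - 1) / 2) ^ 2 := by
          rw [Finset.sum_const, Finset.card_univ, Fintype.card_fin, nsmul_eq_mul]
  -- Put things together
  have h6 : (6 : ℝ) * (n.choose 3 : ℝ) = (n : ℝ) * ((n : ℝ) - 1) * ((n : ℝ) - 2) := by
    have h := six_c3 n
    have hcast : ((6 * n.choose 3 : ℕ) : ℝ) = ((n * (n - 1) * (n - 2) : ℕ) : ℝ) := by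
      exact congrArg (fun k : ℕ => (k : ℝ)) h
    push_cast [Nat.cast_sub (by omega : 1 ≤ n), Nat.cast_sub (by omega : 2 ≤ n)] at hcast
    linarith
  have hMcast : (monoTriCount n G : ℝ) = (n.choose 3 : ℝ) - (N.card : ℝ) := by
    have := hMN
    have : ((monoTriCount n G + N.card : ℕ) : ℝ) = (n.choose 3 : ℝ) := by exact_mod_cast this
    push_cast at this
    linarith
  have hNreal : (N.card : ℝ) ≤ (n : ℝ) * (((n : ℝ) - 1) / 2) ^ 2 / 2 := by
    have hA : (2 : ℝ) * (N.card : ℝ) ≤ (P.card : ℝ) := by exact_mod_cast claimA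
    linarith
  rw [ge_iff_le, hMcast]
  have hnR : (2 : ℝ) ≤ (n : ℝ) := by exact_mod_cast hn2
  nlinarith [hNreal, h6, hnR]
end

section
/- Let F be a c-coloring of a complete graph containing no subcoloring from the family H = H(2,1,0) ∪ H(1,1,1) ∪ H(0,2,1). Let X be a maximal monochromatic clique in F of size at least max(c+1, 6), with color c₁. Then for any vertex y outside X there is at most one edge e₀ between y and X of color c₁, and a single color c₂ ≠ c₁ such that every edge from y to X other than e₀ has color c₂. -/
open Finset

attribute [local instance] Classical.propDecidable

/-- `X` induces a monochromatic clique of color `c₁` in `F`. -/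
def IsMonoClique {n c : ℕ} (F : Sym2 (Fin n) → Fin c) (X : Finset (Fin n)) (c₁ : Fin c) : Prop :=
  ∀ i ∈ X, ∀ j ∈ X, i ≠ j → F s(i, j) = c₁

/-- The vertices `a b d` form a monochromatic triangle of color `c₁` and the fourth vertex `y`
attaches to it in one of the forbidden patterns `H(2,1,0)`, `H(1,1,1)` or `H(0,2,1)`. -/
def badPattern {n c : ℕ} (F : Sym2 (Fin n) → Fin c) (a b d y : Fin n) : Prop :=
  ∃ c₁ : Fin c, F s(a, b) = c₁ ∧ F s(a, d) = c₁ ∧ F s(b, d) = c₁ ∧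
    ((F s(y, a) = c₁ ∧ F s(y, b) = c₁ ∧ F s(y, d) ≠ c₁) ∨
     (F s(y, a) = c₁ ∧ F s(y, b) ≠ c₁ ∧ F s(y, d) ≠ c₁ ∧ F s(y, b) ≠ F s(y, d)) ∨
     (F s(y, a) ≠ c₁ ∧ F s(y, b) ≠ c₁ ∧ F s(y, d) ≠ c₁ ∧ F s(y, a) = F s(y, b) ∧
       F s(y, d) ≠ F s(y, a)))

/-- `F` contains no subcoloring from the family `H = H(2,1,0) ∪ H(1,1,1) ∪ H(0,2,1)`. -/
def NoHConfig {n c : ℕ} (F : Sym2 (Fin n) → Fin c) : Prop :=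
  ∀ a b d y : Fin n, a ≠ b → a ≠ d → a ≠ y → b ≠ d → b ≠ y → d ≠ y →
    ¬ badPattern F a b d y

/-- Claim 2: in a coloring with no `H`-configuration, for a maximal monochromatic clique `X`
of color `c₁` and size at least `max (c+1) 6`, every outside vertex `y` sends at most one
edge of color `c₁` to `X` and all its other edges to `X` share one color `c₂ ≠ c₁`. -/
theorem outside_vertex_structure (n c : ℕ) (F : Sym2 (Fin n) → Fin c) (hF : NoHConfig F)
    (X : Finset (Fin n)) (c₁ : Fin c)
    (hX : IsMonoClique F X c₁)
    (hmax : ∀ v : Fin n, v ∉ X → ¬ IsMonoClique F (insert v X) c₁)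
    (hcard : max (c + 1) 6 ≤ X.card)
    (y : Fin n) (hy : y ∉ X) :
    ∃ c₂ : Fin c, c₂ ≠ c₁ ∧
      (X.filter (fun x => F s(y, x) ≠ c₂)).card ≤ 1 ∧
      ∀ x ∈ X, F s(y, x) = c₁ ∨ F s(y, x) = c₂ := by
  classical
  have hsymm : ∀ i j : Fin n, F s(i, j) = F s(j, i) := fun i j => by rw [Sym2.eq_swap]
  obtain ⟨d, hdX, hd⟩ : ∃ d ∈ X, F s(y, d) ≠ c₁ := by
    by_contra h
    push_neg at h
    refine hmax y hy (fun i hi j hj hij => ?_)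
    rcases Finset.mem_insert.mp hi with hiy | hi
    · rcases Finset.mem_insert.mp hj with hjy | hj
      · exact absurd (hiy.trans hjy.symm) hij
      · rw [hiy]; exact h j hj
    · rcases Finset.mem_insert.mp hj with hjy | hj
      · rw [hjy, hsymm]; exact h i hi
      · exact hX i hi j hj hij
  have step1 : (X.filter (fun x => F s(y, x) = c₁)).card ≤ 1 := by
    by_contra h
    push_neg at h
    obtain ⟨a, ha, b, hb, hab⟩ := Finset.one_lt_card.mp h
    rw [Finset.mem_filter] at ha hb
    have had : a ≠ d := fun e => hd (e ▸ ha.2)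
    have hbd : b ≠ d := fun e => hd (e ▸ hb.2)
    exact hF a b d y hab had (fun e => hy (e ▸ ha.1)) hbd (fun e => hy (e ▸ hb.1))
      (fun e => hy (e ▸ hdX))
      ⟨c₁, hX a ha.1 b hb.1 hab, hX a ha.1 d hdX had, hX b hb.1 d hdX hbd,
        Or.inl ⟨ha.2, hb.2, hd⟩⟩
  set S := X.filter (fun x => F s(y, x) ≠ c₁) with hS
  have hcardS : c ≤ S.card := by
    have h2 : (X.filter (fun x => F s(y, x) = c₁)).card + S.card = X.card :=
      Finset.card_filter_add_card_filter_not (s := X) (p := fun x => F s(y, x) = c₁)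
    have hX6 : c + 1 ≤ X.card := le_trans (le_max_left _ _) hcard
    omega
  obtain ⟨u, hu, v, hv, huv, huvEq⟩ :
      ∃ u ∈ S, ∃ v ∈ S, u ≠ v ∧ F s(y, u) = F s(y, v) := by
    apply Finset.exists_ne_map_eq_of_card_lt_of_maps_to (t := Finset.univ.erase c₁)
    · have : (Finset.univ.erase c₁).card = c - 1 := by
        rw [Finset.card_erase_of_mem (Finset.mem_univ _)]
        simp
      have hc1 : 1 ≤ c := c₁.pos
      omega
    · intro x hx
      exact Finset.mem_erase.mpr ⟨(Finset.mem_filter.mp hx).2, Finset.mem_univ _⟩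
  rw [Finset.mem_filter] at hu hv
  have hall : ∀ w ∈ S, F s(y, w) = F s(y, u) := by
    intro w hw
    rw [Finset.mem_filter] at hw
    by_contra hne
    have hwu : w ≠ u := fun e => hne (e ▸ rfl)
    have hwv : w ≠ v := fun e => hne (by rw [e, ← huvEq])
    exact hF u v w y huv (Ne.symm hwu) (fun e => hy (e ▸ hu.1)) (Ne.symm hwv)
      (fun e => hy (e ▸ hv.1)) (fun e => hy (e ▸ hw.1))
      ⟨c₁, hX u hu.1 v hv.1 huv, hX u hu.1 w hw.1 (Ne.symm hwu),
        hX v hv.1 w hw.1 (Ne.symm hwv),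
        Or.inr (Or.inr ⟨hu.2, hv.2, hw.2, huvEq, hne⟩)⟩
  refine ⟨F s(y, u), hu.2, ?_, ?_⟩
  · refine le_trans (Finset.card_le_card ?_) step1
    intro x hx
    rw [Finset.mem_filter] at hx ⊢
    refine ⟨hx.1, ?_⟩
    by_contra hxc
    exact hx.2 (hall x (Finset.mem_filter.mpr ⟨hx.1, hxc⟩))
  · intro x hxX
    by_cases hxc : F s(y, x) = c₁
    · exact Or.inl hxc
    · exact Or.inr (hall x (Finset.mem_filter.mpr ⟨hxX, hxc⟩))
end

section
/- Let F be a c-coloring of a complete graph containing no subcoloring from H = H(2,1,0) ∪ H(1,1,1) ∪ H(0,2,1) and no subcoloring isomorphic to two vertex-disjoint monochromatic triangles of distinct colors c₁ ≠ c₂ with all nine connecting edges of a third color c₃. If X₁ and X₂ are two distinct maximal monochromatic cliques of size at least max(c+1,6) with colors c₁ and c₂ respectively, then |X₁ ∩ X₂| ≤ 1; if they are disjoint then c₁ = c₂ and the edges between X₁ and X₂ consist of a (possibly empty) matching of color c₁ together with all remaining cross edges in one single color c₃ distinct from c₁; and if they share exactly one vertex v then c₁ = c₂ and all edges between X₁∖{v}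 and X₂∖{v} have a single color c₃ distinct from c₁. -/
open Finset

attribute [local instance] Classical.propDecidable

/-- `F` contains no pair of disjoint monochromatic triangles of distinct colors `c₁ ≠ c₂`
all of whose nine connecting edges have a third color `c₃`. -/
def NoK33Config {n c : ℕ} (F : Sym2 (Fin n) → Fin c) : Prop :=
  ∀ a b d x y z : Fin n, [a, b, d, x, y, z].Pairwise (· ≠ ·) →
    ∀ c₁ c₂ c₃ : Fin c, c₁ ≠ c₂ → c₁ ≠ c₃ → c₂ ≠ c₃ →
      ¬(IsMonoClique F {a, b, d} c₁ ∧ IsMonoClique F {x, y, z} c₂ ∧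
        ∀ u ∈ ({a, b, d} : Finset (Fin n)), ∀ v ∈ ({x, y, z} : Finset (Fin n)),
          F s(u, v) = c₃)

lemma Fswap {n c : ℕ} (F : Sym2 (Fin n) → Fin c) (i j : Fin n) : F s(i,j) = F s(j,i) := by
  rw [Sym2.eq_swap]

lemma attach_one {n c : ℕ} {F : Sym2 (Fin n) → Fin c} (hF : NoHConfig F)
    {X : Finset (Fin n)} {c₁ : Fin c} (hX : IsMonoClique F X c₁)
    (hmax : ∀ v : Fin n, v ∉ X → ¬ IsMonoClique F (insert v X) c₁)
    {x : Fin n} (hx : x ∉ X) :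
    ∀ u ∈ X, ∀ v ∈ X, u ≠ v → F s(x,u) = c₁ → F s(x,v) = c₁ → False := by
  intro u hu v hv huv h1 h2
  by_cases hall : ∀ w ∈ X, F s(x,w) = c₁
  · refine hmax x hx ?_
    intro i hi j hj hij
    rcases mem_insert.1 hi with rfl | hi'
    · rcases mem_insert.1 hj with rfl | hj'
      · exact absurd rfl hij
      · exact hall j hj'
    · rcases mem_insert.1 hj with rfl | hj'
      · rw [Fswap F]; exact hall i hi'
      · exact hX i hi' j hj' hij
  · push_neg at hall
    obtain ⟨w, hw, hwc⟩ := hall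
    have hwu : w ≠ u := fun h => hwc (h ▸ h1)
    have hwv : w ≠ v := fun h => hwc (h ▸ h2)
    have hux : u ≠ x := fun h => hx (h ▸ hu)
    have hvx : v ≠ x := fun h => hx (h ▸ hv)
    have hwx : w ≠ x := fun h => hx (h ▸ hw)
    exact hF u v w x huv hwu.symm hux hwv.symm hvx hwx
      ⟨c₁, hX u hu v hv huv, hX u hu w hw hwu.symm, hX v hv w hw hwv.symm,
        Or.inl ⟨h1, h2, hwc⟩⟩

lemma attach_color {n c : ℕ} {F : Sym2 (Fin n) → Fin c} (hF : NoHConfig F) (hc2 : 2 ≤ c)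
    {X : Finset (Fin n)} {c₁ : Fin c} (hX : IsMonoClique F X c₁)
    (hcard : max (c + 1) 6 ≤ X.card) {x : Fin n} (hx : x ∉ X) :
    ∃ c₃, c₃ ≠ c₁ ∧ ∀ v ∈ X, F s(x,v) ≠ c₁ → F s(x,v) = c₃ := by
  by_cases hB : ∃ v ∈ X, F s(x,v) ≠ c₁
  · obtain ⟨v₀, hv₀, hv₀c⟩ := hB
    refine ⟨F s(x,v₀), hv₀c, ?_⟩
    intro w hw hwc
    by_contra hne
    have hwv : w ≠ v₀ := fun h => hne (h ▸ rfl)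
    have hvx : v₀ ≠ x := fun h => hx (h ▸ hv₀)
    have hwx : w ≠ x := fun h => hx (h ▸ hw)
    by_cases hA : ∃ a ∈ X, F s(x,a) = c₁
    · obtain ⟨a, ha, hac⟩ := hA
      have hav : a ≠ v₀ := fun h => hv₀c (h ▸ hac)
      have haw : a ≠ w := fun h => hwc (h ▸ hac)
      have hax : a ≠ x := fun h => hx (h ▸ ha)
      exact hF a v₀ w x hav haw hax hwv.symm hvx hwx
        ⟨c₁, hX a ha v₀ hv₀ hav, hX a ha w hw haw, hX v₀ hv₀ w hw hwv.symm,
          Or.inr (Or.inl ⟨hac, hv₀c, hwc, fun h => hne h.symm⟩)⟩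
    · push_neg at hA
      have hlt : (Finset.univ : Finset (Fin c)).card < X.card := by
        have := le_max_left (c+1) 6
        simp only [Finset.card_univ, Fintype.card_fin]
        omega
      obtain ⟨p, hp, q, hq, hpq, hfpq⟩ :=
        Finset.exists_ne_map_eq_of_card_lt_of_maps_to hlt
          (fun a _ => Finset.mem_univ (F s(x,a)))
      obtain ⟨w', hw', hw'p⟩ : ∃ w' ∈ X, F s(x,w') ≠ F s(x,p) := by
        by_cases h : F s(x,w) = F s(x,p)
        · exact ⟨v₀, hv₀, fun h2 => hne (h.trans h2.symm)⟩
        · exact ⟨w, hw, h⟩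
      have hpw' : p ≠ w' := fun h => hw'p (h ▸ rfl)
      have hqw' : q ≠ w' := fun h => hw'p (by rw [← h, ← hfpq])
      have hpx : p ≠ x := fun h => hx (h ▸ hp)
      have hqx : q ≠ x := fun h => hx (h ▸ hq)
      have hw'x : w' ≠ x := fun h => hx (h ▸ hw')
      exact hF p q w' x hpq hpw' hpx hqw' hqx hw'x
        ⟨c₁, hX p hp q hq hpq, hX p hp w' hw' hpw', hX q hq w' hw' hqw',
          Or.inr (Or.inr ⟨hA p hp, hA q hq, hA w' hw', hfpq, hw'p⟩)⟩
  · push_neg at hB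
    haveI : Nontrivial (Fin c) := Fin.nontrivial_iff_two_le.mpr hc2
    obtain ⟨c₃, hc₃⟩ := exists_ne c₁
    exact ⟨c₃, hc₃, fun v hv hvc => absurd (hB v hv) hvc⟩

lemma inter_aux {n c : ℕ} {F : Sym2 (Fin n) → Fin c} (hF : NoHConfig F)
    {X₁ X₂ : Finset (Fin n)} {c₁ : Fin c}
    (hX₁ : IsMonoClique F X₁ c₁) (hX₂ : IsMonoClique F X₂ c₁)
    (hmax₂ : ∀ v : Fin n, v ∉ X₂ → ¬ IsMonoClique F (insert v X₂) c₁)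
    {u w x : Fin n} (hu1 : u ∈ X₁) (hu2 : u ∈ X₂) (hw1 : w ∈ X₁) (hw2 : w ∈ X₂)
    (huw : u ≠ w) (hx1 : x ∈ X₁) (hx2 : x ∉ X₂) : False := by
  have hnot := hmax₂ x hx2
  have hy : ∃ y ∈ X₂, y ≠ x ∧ F s(x,y) ≠ c₁ := by
    by_contra hy
    push_neg at hy
    refine hnot (fun i hi j hj hij => ?_)
    rcases mem_insert.1 hi with rfl | hi'
    · rcases mem_insert.1 hj with rfl | hj'
      · exact absurd rfl hij
      · exact hy j hj' (Ne.symm hij)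
    · rcases mem_insert.1 hj with rfl | hj'
      · rw [Fswap F]; exact hy i hi' hij
      · exact hX₂ i hi' j hj' hij
  obtain ⟨y, hy2, hyx, hyc⟩ := hy
  have hxu : x ≠ u := fun h => hx2 (h ▸ hu2)
  have hxw : x ≠ w := fun h => hx2 (h ▸ hw2)
  have hyu : y ≠ u := fun h => hyc (h ▸ hX₁ x hx1 u hu1 hxu)
  have hyw : y ≠ w := fun h => hyc (h ▸ hX₁ x hx1 w hw1 hxw)
  exact hF u w y x huw hyu.symm hxu.symm hyw.symm hxw.symm hyx
    ⟨c₁, hX₁ u hu1 w hw1 huw, hX₂ u hu2 y hy2 hyu.symm, hX₂ w hw2 y hy2 hyw.symm,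
      Or.inl ⟨hX₁ x hx1 u hu1 hxu, hX₁ x hx1 w hw1 hxw, hyc⟩⟩

lemma pick_one {α : Type*} [DecidableEq α] {X S : Finset α} (h : S.card < X.card) :
    ∃ a ∈ X, a ∉ S := by
  have h0 : 0 < (X \ S).card := by have := Finset.le_card_sdiff S X; omega
  obtain ⟨a, ha⟩ := Finset.card_pos.1 h0
  exact ⟨a, (mem_sdiff.1 ha).1, (mem_sdiff.1 ha).2⟩

lemma pick_two {α : Type*} [DecidableEq α] {X S : Finset α} (h : S.card + 1 < X.card) :
    ∃ a ∈ X, ∃ b ∈ X, a ≠ b ∧ a ∉ S ∧ b ∉ S := by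
  have h0 : 1 < (X \ S).card := by have := Finset.le_card_sdiff S X; omega
  obtain ⟨a, ha, b, hb, hab⟩ := Finset.one_lt_card.1 h0
  exact ⟨a, (mem_sdiff.1 ha).1, b, (mem_sdiff.1 hb).1, hab,
    (mem_sdiff.1 ha).2, (mem_sdiff.1 hb).2⟩

lemma pick_three {α : Type*} [DecidableEq α] {X S : Finset α} (h : S.card + 2 < X.card) :
    ∃ a ∈ X, ∃ b ∈ X, ∃ d ∈ X, a ≠ b ∧ a ≠ d ∧ b ≠ d ∧ a ∉ S ∧ b ∉ S ∧ d ∉ S := by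
  have h0 : 2 < (X \ S).card := by have := Finset.le_card_sdiff S X; omega
  obtain ⟨a, ha, b, hb, d, hd, hab, had, hbd⟩ := Finset.two_lt_card.1 h0
  exact ⟨a, (mem_sdiff.1 ha).1, b, (mem_sdiff.1 hb).1, d, (mem_sdiff.1 hd).1, hab, had, hbd,
    (mem_sdiff.1 ha).2, (mem_sdiff.1 hb).2, (mem_sdiff.1 hd).2⟩

/-- Claim 4: structure of the edges between two distinct maximal monochromatic cliques in a
standard coloring. -/
theorem maximal_cliques_interaction (n c : ℕ) (F : Sym2 (Fin n) → Fin c)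
    (hF : NoHConfig F) (hF' : NoK33Config F)
    (X₁ X₂ : Finset (Fin n)) (c₁ c₂ : Fin c) (hne : X₁ ≠ X₂)
    (hX₁ : IsMonoClique F X₁ c₁)
    (hmax₁ : ∀ v : Fin n, v ∉ X₁ → ¬ IsMonoClique F (insert v X₁) c₁)
    (hX₂ : IsMonoClique F X₂ c₂)
    (hmax₂ : ∀ v : Fin n, v ∉ X₂ → ¬ IsMonoClique F (insert v X₂) c₂)
    (hcard₁ : max (c + 1) 6 ≤ X₁.card) (hcard₂ : max (c + 1) 6 ≤ X₂.card) :
    (X₁ ∩ X₂).card ≤ 1 ∧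
    (X₁ ∩ X₂ = ∅ → c₁ = c₂ ∧ ∃ c₃ : Fin c, c₃ ≠ c₁ ∧
      ∃ M : Finset (Fin n × Fin n),
        (∀ p ∈ M, p.1 ∈ X₁ ∧ p.2 ∈ X₂) ∧
        (∀ p ∈ M, ∀ q ∈ M, p ≠ q → p.1 ≠ q.1 ∧ p.2 ≠ q.2) ∧
        (∀ p ∈ M, F s(p.1, p.2) = c₁) ∧
        (∀ x ∈ X₁, ∀ y ∈ X₂, (x, y) ∉ M → F s(x, y) = c₃)) ∧
    (∀ v : Fin n, X₁ ∩ X₂ = {v} → c₁ = c₂ ∧ ∃ c₃ : Fin c, c₃ ≠ c₁ ∧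
      ∀ x ∈ X₁, x ≠ v → ∀ y ∈ X₂, y ≠ v → F s(x, y) = c₃) := by
  have h6₁ : 6 ≤ X₁.card := le_trans (le_max_right _ _) hcard₁
  have h6₂ : 6 ≤ X₂.card := le_trans (le_max_right _ _) hcard₂
  have hc2 : 2 ≤ c := by
    by_contra h
    push_neg at h
    have hc1 : c = 1 := by have := c₁.pos; omega
    subst hc1
    have h1 : ∀ v, v ∈ X₁ := by
      intro v; by_contra hv
      exact hmax₁ v hv (fun i _ j _ _ => Subsingleton.elim _ _)
    have h2 : ∀ v, v ∈ X₂ := by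
      intro v; by_contra hv
      exact hmax₂ v hv (fun i _ j _ _ => Subsingleton.elim _ _)
    exact hne (Finset.ext fun a => ⟨fun _ => h2 a, fun _ => h1 a⟩)
  -- one c₁-neighbour / single other colour, as total functions
  have one₂ : ∀ x, x ∉ X₁ → ∀ u ∈ X₁, ∀ u' ∈ X₁, u ≠ u' →
      F s(x,u) = c₁ → F s(x,u') = c₁ → False :=
    fun x hx => attach_one hF hX₁ hmax₁ hx
  have one₁ : ∀ x, x ∉ X₂ → ∀ u ∈ X₂, ∀ u' ∈ X₂, u ≠ u' →
      F s(x,u) = c₂ → F s(x,u') = c₂ → False :=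
    fun x hx => attach_one hF hX₂ hmax₂ hx
  have key₂ : ∀ x, ∃ c₃, c₃ ≠ c₁ ∧ (x ∉ X₁ → ∀ u ∈ X₁, F s(x,u) ≠ c₁ → F s(x,u) = c₃) := by
    intro x
    by_cases hx : x ∉ X₁
    · obtain ⟨c₃, h1, h2⟩ := attach_color hF hc2 hX₁ hcard₁ hx
      exact ⟨c₃, h1, fun _ => h2⟩
    · haveI : Nontrivial (Fin c) := Fin.nontrivial_iff_two_le.mpr hc2
      obtain ⟨c₃, h⟩ := exists_ne c₁
      exact ⟨c₃, h, fun h' => (hx h').elim⟩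
  choose g hg1 hg2 using key₂
  have key₁ : ∀ x, ∃ c₃, c₃ ≠ c₂ ∧ (x ∉ X₂ → ∀ u ∈ X₂, F s(x,u) ≠ c₂ → F s(x,u) = c₃) := by
    intro x
    by_cases hx : x ∉ X₂
    · obtain ⟨c₃, h1, h2⟩ := attach_color hF hc2 hX₂ hcard₂ hx
      exact ⟨c₃, h1, fun _ => h2⟩
    · haveI : Nontrivial (Fin c) := Fin.nontrivial_iff_two_le.mpr hc2
      obtain ⟨c₃, h⟩ := exists_ne c₂
      exact ⟨c₃, h, fun h' => (hx h').elim⟩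
  choose f hf1 hf2 using key₁
  -- c₁-neighbourhood in X₁ of an outside vertex
  have hN : ∀ x, x ∉ X₁ → (X₁.filter (fun u => F s(x,u) = c₁)).card ≤ 1 := by
    intro x hx
    refine Finset.card_le_one.2 (fun a ha b hb => ?_)
    by_contra hab
    exact one₂ x hx a (mem_filter.1 ha).1 b (mem_filter.1 hb).1 hab
      (mem_filter.1 ha).2 (mem_filter.1 hb).2
  have hN' : ∀ x, x ∉ X₂ → (X₂.filter (fun u => F s(x,u) = c₂)).card ≤ 1 := by
    intro x hx
    refine Finset.card_le_one.2 (fun a ha b hb => ?_)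
    by_contra hab
    exact one₁ x hx a (mem_filter.1 ha).1 b (mem_filter.1 hb).1 hab
      (mem_filter.1 ha).2 (mem_filter.1 hb).2
  -- constancy of g
  have const : ∀ p, p ∈ X₂ → p ∉ X₁ → ∀ q, q ∈ X₂ → q ∉ X₁ → g p ≠ c₂ → g q ≠ c₂ →
      (∃ u ∈ X₁, u ∉ X₂ ∧ F s(p,u) ≠ c₁ ∧ F s(q,u) ≠ c₁) → g p = g q := by
    intro p hp2 hp1 q hq2 hq1 hgp hgq ⟨u, hu1, hu2, hnp, hnq⟩
    have e1 : F s(p,u) = g p := hg2 p hp1 u hu1 hnp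
    have e2 : F s(q,u) = g q := hg2 q hq1 u hu1 hnq
    have e3 : F s(u,p) = f u := hf2 u hu2 p hp2 (by rw [Fswap F u p, e1]; exact hgp)
    have e4 : F s(u,q) = f u := hf2 u hu2 q hq2 (by rw [Fswap F u q, e2]; exact hgq)
    rw [← e1, Fswap F p u, e3, ← e4, ← Fswap F q u, e2]
  -- Part 1
  have hint : (X₁ ∩ X₂).card ≤ 1 := by
    by_contra h
    push_neg at h
    obtain ⟨u, hu, w, hw, huw⟩ := Finset.one_lt_card.1 h
    obtain ⟨hu1, hu2⟩ := mem_inter.1 hu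
    obtain ⟨hw1, hw2⟩ := mem_inter.1 hw
    have hcc : c₁ = c₂ := by rw [← hX₁ u hu1 w hw1 huw]; exact hX₂ u hu2 w hw2 huw
    obtain rfl := hcc
    by_cases hs : X₁ ⊆ X₂
    · have hs2 : ¬ X₂ ⊆ X₁ := fun h2 => hne (Finset.Subset.antisymm hs h2)
      obtain ⟨x, hx2, hx1⟩ := Finset.not_subset.1 hs2
      exact inter_aux hF hX₂ hX₁ hmax₁ hu2 hu1 hw2 hw1 huw hx2 hx1
    · obtain ⟨x, hx1, hx2⟩ := Finset.not_subset.1 hs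
      exact inter_aux hF hX₁ hX₂ hmax₂ hu1 hu2 hw1 hw2 huw hx1 hx2
  refine ⟨hint, ?_, ?_⟩
  · -- disjoint case
    intro hd
    have disj : ∀ a, a ∈ X₁ → a ∈ X₂ → False := fun a h1 h2 =>
      Finset.notMem_empty a (hd ▸ mem_inter.2 ⟨h1, h2⟩)
    have hcc : c₁ = c₂ := by
      by_contra hcc
      -- at most one vertex of X₂ has g-colour c₂
      have hS : (X₂.filter (fun x => g x = c₂)).card ≤ 1 := by
        refine Finset.card_le_one.2 (fun p hp q hq => ?_)
        by_contra hpq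
        obtain ⟨hp2, hpg⟩ := mem_filter.1 hp
        obtain ⟨hq2, hqg⟩ := mem_filter.1 hq
        have hp1 : p ∉ X₁ := fun h => disj p h hp2
        have hq1 : q ∉ X₁ := fun h => disj q h hq2
        have hcard : ((X₁.filter (fun u => F s(p,u) = c₁)) ∪
            (X₁.filter (fun u => F s(q,u) = c₁))).card < X₁.card := by
          have := Finset.card_union_le (X₁.filter (fun u => F s(p,u) = c₁))
            (X₁.filter (fun u => F s(q,u) = c₁))
          have h1 := hN p hp1
          have h2 := hN q hq1
          omega
        obtain ⟨u, hu1, huS⟩ := pick_one hcard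
        have hnp : F s(p,u) ≠ c₁ := fun h =>
          huS (mem_union_left _ (mem_filter.2 ⟨hu1, h⟩))
        have hnq : F s(q,u) ≠ c₁ := fun h =>
          huS (mem_union_right _ (mem_filter.2 ⟨hu1, h⟩))
        have e1 : F s(p,u) = c₂ := (hg2 p hp1 u hu1 hnp).trans hpg
        have e2 : F s(q,u) = c₂ := (hg2 q hq1 u hu1 hnq).trans hqg
        exact one₁ u (fun h => disj u hu1 h) p hp2 q hq2 hpq
          (by rw [Fswap F u p]; exact e1) (by rw [Fswap F u q]; exact e2)
      -- choose x y z in X₂ avoiding those, with g ≠ c₂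
      have hxyz : (X₂.filter (fun x => g x = c₂)).card + 2 < X₂.card := by omega
      obtain ⟨x, hx2, y, hy2, z, hz2, hxy, hxz, hyz, hxS, hyS, hzS⟩ := pick_three hxyz
      have hgx2 : g x ≠ c₂ := fun h => hxS (mem_filter.2 ⟨hx2, h⟩)
      have hgy2 : g y ≠ c₂ := fun h => hyS (mem_filter.2 ⟨hy2, h⟩)
      have hgz2 : g z ≠ c₂ := fun h => hzS (mem_filter.2 ⟨hz2, h⟩)
      have hx1 : x ∉ X₁ := fun h => disj x h hx2
      have hy1 : y ∉ X₁ := fun h => disj y h hy2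
      have hz1 : z ∉ X₁ := fun h => disj z h hz2
      -- choose a b d in X₁ avoiding all c₁-neighbourhoods
      set Bad := (X₁.filter (fun u => F s(x,u) = c₁)) ∪
        (X₁.filter (fun u => F s(y,u) = c₁)) ∪ (X₁.filter (fun u => F s(z,u) = c₁)) with hBad
      have hBadcard : Bad.card + 2 < X₁.card := by
        have h1 := Finset.card_union_le ((X₁.filter (fun u => F s(x,u) = c₁)) ∪
          (X₁.filter (fun u => F s(y,u) = c₁))) (X₁.filter (fun u => F s(z,u) = c₁))
        have h2 := Finset.card_union_le (X₁.filter (fun u => F s(x,u) = c₁))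
          (X₁.filter (fun u => F s(y,u) = c₁))
        have h3 := hN x hx1
        have h4 := hN y hy1
        have h5 := hN z hz1
        rw [hBad]
        omega
      obtain ⟨a, ha1, b, hb1, d, hd1, hab, had, hbd, haS, hbS, hdS⟩ := pick_three hBadcard
      have hnb : ∀ u, u ∈ X₁ → u ∉ Bad →
          F s(x,u) ≠ c₁ ∧ F s(y,u) ≠ c₁ ∧ F s(z,u) ≠ c₁ := by
        intro u hu1 huB
        refine ⟨fun h => huB ?_, fun h => huB ?_, fun h => huB ?_⟩
        · exact mem_union_left _ (mem_union_left _ (mem_filter.2 ⟨hu1, h⟩))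
        · exact mem_union_left _ (mem_union_right _ (mem_filter.2 ⟨hu1, h⟩))
        · exact mem_union_right _ (mem_filter.2 ⟨hu1, h⟩)
      -- g is constant on x y z
      have hgyx : g y = g x := by
        refine const y hy2 hy1 x hx2 hx1 hgy2 hgx2 ⟨a, ha1, fun h => disj a ha1 h, ?_, ?_⟩
        · exact (hnb a ha1 haS).2.1
        · exact (hnb a ha1 haS).1
      have hgzx : g z = g x := by
        refine const z hz2 hz1 x hx2 hx1 hgz2 hgx2 ⟨a, ha1, fun h => disj a ha1 h, ?_, ?_⟩
        · exact (hnb a ha1 haS).2.2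
        · exact (hnb a ha1 haS).1
      -- apply NoK33Config
      have sub1 : ∀ t, t ∈ ({a,b,d} : Finset (Fin n)) → t ∈ X₁ := by
        intro t ht
        simp only [mem_insert, mem_singleton] at ht
        rcases ht with rfl | rfl | rfl <;> assumption
      have sub2 : ∀ t, t ∈ ({x,y,z} : Finset (Fin n)) → t ∈ X₂ := by
        intro t ht
        simp only [mem_insert, mem_singleton] at ht
        rcases ht with rfl | rfl | rfl <;> assumption
      have pw : [a, b, d, x, y, z].Pairwise (· ≠ ·) := by
        have hax : a ≠ x := fun h => disj a ha1 (h ▸ hx2)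
        have hay : a ≠ y := fun h => disj a ha1 (h ▸ hy2)
        have haz : a ≠ z := fun h => disj a ha1 (h ▸ hz2)
        have hbx : b ≠ x := fun h => disj b hb1 (h ▸ hx2)
        have hby : b ≠ y := fun h => disj b hb1 (h ▸ hy2)
        have hbz : b ≠ z := fun h => disj b hb1 (h ▸ hz2)
        have hdx : d ≠ x := fun h => disj d hd1 (h ▸ hx2)
        have hdy : d ≠ y := fun h => disj d hd1 (h ▸ hy2)
        have hdz : d ≠ z := fun h => disj d hd1 (h ▸ hz2)
        refine List.Pairwise.cons ?_ (List.Pairwise.cons ?_ (List.Pairwise.cons ?_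
          (List.Pairwise.cons ?_ (List.Pairwise.cons ?_ (List.pairwise_singleton _ _)))))
        · intro t ht
          simp only [List.mem_cons, List.mem_singleton, List.not_mem_nil, or_false] at ht
          rcases ht with rfl | rfl | rfl | rfl | rfl <;> assumption
        · intro t ht
          simp only [List.mem_cons, List.mem_singleton, List.not_mem_nil, or_false] at ht
          rcases ht with rfl | rfl | rfl | rfl <;> assumption
        · intro t ht
          simp only [List.mem_cons, List.mem_singleton, List.not_mem_nil, or_false] at ht
          rcases ht with rfl | rfl | rfl <;> assumption
        · intro t ht
          simp only [List.mem_cons, List.mem_singleton, List.not_mem_nil, or_false] at ht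
          rcases ht with rfl | rfl <;> assumption
        · intro t ht
          simp only [List.mem_cons, List.mem_singleton, List.not_mem_nil, or_false] at ht
          subst ht; assumption
      refine hF' a b d x y z pw c₁ c₂ (g x) hcc (Ne.symm (hg1 x)) (Ne.symm hgx2)
        ⟨fun i hi j hj hij => hX₁ i (sub1 i hi) j (sub1 j hj) hij,
         fun i hi j hj hij => hX₂ i (sub2 i hi) j (sub2 j hj) hij, ?_⟩
      intro u hu w hw
      have hu1 : u ∈ X₁ := sub1 u hu
      have huB : u ∉ Bad := by
        simp only [mem_insert, mem_singleton] at hu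
        rcases hu with rfl | rfl | rfl <;> assumption
      obtain ⟨h1, h2, h3⟩ := hnb u hu1 huB
      have hw' : w ∈ X₂ ∧ F s(w,u) = g x := by
        simp only [mem_insert, mem_singleton] at hw
        rcases hw with h | h | h
        · rw [h]; exact ⟨hx2, hg2 x hx1 u hu1 h1⟩
        · rw [h]; exact ⟨hy2, (hg2 y hy1 u hu1 h2).trans hgyx⟩
        · rw [h]; exact ⟨hz2, (hg2 z hz1 u hu1 h3).trans hgzx⟩
      rw [Fswap F u w]
      exact hw'.2
    obtain rfl := hcc
    refine ⟨rfl, ?_⟩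
    obtain ⟨x₀, hx₀⟩ := Finset.card_pos.1 (by omega : 0 < X₂.card)
    have hx₀1 : x₀ ∉ X₁ := fun h => disj x₀ h hx₀
    refine ⟨g x₀, hg1 x₀, (X₁ ×ˢ X₂).filter (fun p => F s(p.1, p.2) = c₁), ?_, ?_, ?_, ?_⟩
    · intro p hp
      exact mem_product.1 (mem_filter.1 hp).1
    · intro p hp q hq hpq
      obtain ⟨hp', hpc⟩ := mem_filter.1 hp
      obtain ⟨hq', hqc⟩ := mem_filter.1 hq
      obtain ⟨hp1, hp2⟩ := mem_product.1 hp'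
      obtain ⟨hq1, hq2⟩ := mem_product.1 hq'
      constructor
      · intro h
        have h22 : p.2 ≠ q.2 := fun h2 => hpq (Prod.ext h h2)
        exact one₁ p.1 (fun hh => disj p.1 hp1 hh) p.2 hp2 q.2 hq2 h22 hpc
          (by rw [h]; exact hqc)
      · intro h
        have h11 : p.1 ≠ q.1 := fun h1 => hpq (Prod.ext h1 h)
        exact one₂ p.2 (fun hh => disj p.2 hh hp2) p.1 hp1 q.1 hq1 h11
          (by rw [Fswap F p.2 p.1]; exact hpc)
          (by rw [Fswap F p.2 q.1, h]; exact hqc)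
    · intro p hp
      exact (mem_filter.1 hp).2
    · intro a ha b hb hnM
      have hb1 : b ∉ X₁ := fun h => disj b h hb
      have hne1 : F s(b,a) ≠ c₁ := fun h =>
        hnM (mem_filter.2 ⟨mem_product.2 ⟨ha, hb⟩, by rw [Fswap F a b]; exact h⟩)
      have e1 : F s(b,a) = g b := hg2 b hb1 a ha hne1
      have hgb : g b = g x₀ := by
        have hcard : ((X₁.filter (fun u => F s(b,u) = c₁)) ∪
            (X₁.filter (fun u => F s(x₀,u) = c₁))).card < X₁.card := by
          have := Finset.card_union_le (X₁.filter (fun u => F s(b,u) = c₁))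
            (X₁.filter (fun u => F s(x₀,u) = c₁))
          have h1 := hN b hb1
          have h2 := hN x₀ hx₀1
          omega
        obtain ⟨u, hu1, huS⟩ := pick_one hcard
        refine const b hb hb1 x₀ hx₀ hx₀1 (hg1 b) (hg1 x₀)
          ⟨u, hu1, fun h => disj u hu1 h, ?_, ?_⟩
        · exact fun h => huS (mem_union_left _ (mem_filter.2 ⟨hu1, h⟩))
        · exact fun h => huS (mem_union_right _ (mem_filter.2 ⟨hu1, h⟩))
      rw [Fswap F a b, e1, hgb]
  · -- intersection is a single vertex
    intro v hv
    have hvm : v ∈ X₁ ∩ X₂ := by rw [hv]; exact mem_singleton_self v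
    obtain ⟨hv1, hv2⟩ := mem_inter.1 hvm
    have hout2 : ∀ x, x ∈ X₂ → x ≠ v → x ∉ X₁ := by
      intro x hx hxv h1
      exact hxv (mem_singleton.1 (hv ▸ mem_inter.2 ⟨h1, hx⟩))
    have hout1 : ∀ x, x ∈ X₁ → x ≠ v → x ∉ X₂ := by
      intro x hx hxv h2
      exact hxv (mem_singleton.1 (hv ▸ mem_inter.2 ⟨hx, h2⟩))
    have hcc : c₁ = c₂ := by
      by_contra hcc
      -- two vertices of X₁ besides v
      have hcd : ({v} : Finset (Fin n)).card + 1 < X₁.card := by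
        simp only [card_singleton]; omega
      obtain ⟨u, hu1, u', hu'1, huu', huv, hu'v⟩ := pick_two hcd
      have huv' : u ≠ v := fun h => huv (by rw [h]; exact mem_singleton_self v)
      have hu'v' : u' ≠ v := fun h => hu'v (by rw [h]; exact mem_singleton_self v)
      have hu2 : u ∉ X₂ := hout1 u hu1 huv'
      have hu'2 : u' ∉ X₂ := hout1 u' hu'1 hu'v'
      have hfu : f u = c₁ := by
        have e : F s(u,v) = c₁ := hX₁ u hu1 v hv1 huv'
        have e2 : F s(u,v) = f u := hf2 u hu2 v hv2 (by rw [e]; exact hcc)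
        exact e2.symm.trans e
      have hfu' : f u' = c₁ := by
        have e : F s(u',v) = c₁ := hX₁ u' hu'1 v hv1 hu'v'
        have e2 : F s(u',v) = f u' := hf2 u' hu'2 v hv2 (by rw [e]; exact hcc)
        exact e2.symm.trans e
      -- pick x in X₂ avoiding v and c₂-neighbourhoods of u, u'
      set Bad := ({v} : Finset (Fin n)) ∪ (X₂.filter (fun y => F s(u,y) = c₂)) ∪
        (X₂.filter (fun y => F s(u',y) = c₂)) with hBad
      have hBadcard : Bad.card < X₂.card := by
        have h1 := Finset.card_union_le (({v} : Finset (Fin n)) ∪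
          (X₂.filter (fun y => F s(u,y) = c₂))) (X₂.filter (fun y => F s(u',y) = c₂))
        have h2 := Finset.card_union_le ({v} : Finset (Fin n))
          (X₂.filter (fun y => F s(u,y) = c₂))
        have h3 := hN' u hu2
        have h4 := hN' u' hu'2
        have h5 : ({v} : Finset (Fin n)).card = 1 := card_singleton v
        rw [hBad]
        omega
      obtain ⟨x, hx2, hxB⟩ := pick_one hBadcard
      have hxv : x ≠ v := fun h =>
        hxB (mem_union_left _ (mem_union_left _ (by rw [h]; exact mem_singleton_self v)))
      have hx1 : x ∉ X₁ := hout2 x hx2 hxv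
      have e1 : F s(u,x) = c₁ := by
        have : F s(u,x) ≠ c₂ := fun h =>
          hxB (mem_union_left _ (mem_union_right _ (mem_filter.2 ⟨hx2, h⟩)))
        exact (hf2 u hu2 x hx2 this).trans hfu
      have e2 : F s(u',x) = c₁ := by
        have : F s(u',x) ≠ c₂ := fun h =>
          hxB (mem_union_right _ (mem_filter.2 ⟨hx2, h⟩))
        exact (hf2 u' hu'2 x hx2 this).trans hfu'
      exact one₂ x hx1 u hu1 u' hu'1 huu'
        (by rw [Fswap F x u]; exact e1) (by rw [Fswap F x u']; exact e2)
    obtain rfl := hcc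
    refine ⟨rfl, ?_⟩
    have hcd : ({v} : Finset (Fin n)).card < X₂.card := by
      simp only [card_singleton]; omega
    obtain ⟨x₀, hx₀2, hx₀v⟩ := pick_one hcd
    have hx₀v' : x₀ ≠ v := fun h => hx₀v (by rw [h]; exact mem_singleton_self v)
    have hx₀1 : x₀ ∉ X₁ := hout2 x₀ hx₀2 hx₀v'
    refine ⟨g x₀, hg1 x₀, ?_⟩
    intro a ha1 hav b hb2 hbv
    have hb1 : b ∉ X₁ := hout2 b hb2 hbv
    have hna : F s(b,a) ≠ c₁ := by
      intro h
      exact one₂ b hb1 a ha1 v hv1 hav h (hX₂ b hb2 v hv2 hbv)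
    have e1 : F s(b,a) = g b := hg2 b hb1 a ha1 hna
    have hgb : g b = g x₀ := by
      set Bad := ({v} : Finset (Fin n)) ∪ (X₁.filter (fun u => F s(b,u) = c₁)) ∪
        (X₁.filter (fun u => F s(x₀,u) = c₁)) with hBad
      have hBadcard : Bad.card < X₁.card := by
        have h1 := Finset.card_union_le (({v} : Finset (Fin n)) ∪
          (X₁.filter (fun u => F s(b,u) = c₁))) (X₁.filter (fun u => F s(x₀,u) = c₁))
        have h2 := Finset.card_union_le ({v} : Finset (Fin n))
          (X₁.filter (fun u => F s(b,u) = c₁))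
        have h3 := hN b hb1
        have h4 := hN x₀ hx₀1
        have h5 : ({v} : Finset (Fin n)).card = 1 := card_singleton v
        rw [hBad]
        omega
      obtain ⟨u, hu1, huB⟩ := pick_one hBadcard
      have huv : u ≠ v := fun h =>
        huB (mem_union_left _ (mem_union_left _ (by rw [h]; exact mem_singleton_self v)))
      refine const b hb2 hb1 x₀ hx₀2 hx₀1 (hg1 b) (hg1 x₀)
        ⟨u, hu1, hout1 u hu1 huv, ?_, ?_⟩
      · exact fun h => huB (mem_union_left _ (mem_union_right _ (mem_filter.2 ⟨hu1, h⟩)))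
      · exact fun h => huB (mem_union_right _ (mem_filter.2 ⟨hu1, h⟩))
    rw [Fswap F a b, e1, hgb]
end

section
/- Let r ≥ 2, and for n ∈ ℕ let R_n ⊆ ℝ^r denote the set of vectors s with Σ_i s_i = 1 such that n·s is an integer vector whose entries pairwise differ by at most 1. Let Q_n(ρ) = Σ_i C(nρ_i, 3)/C(n,3). Then for every ρ in the standard simplex with L¹-type distance min_{s∈R_n} ‖max(ρ − s, 0)‖₁ = x > 0, one has Q_n(ρ) − Q_n(s*) ≥ x³/r² for n large, where s* ∈ R_n attains the minimum of Q_n on R_n. -/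
open Finset Filter Topology

/-- The binomial coefficient `C(x, 3)` extended to real arguments. -/
noncomputable def chooseThreeReal (x : ℝ) : ℝ := x * (x - 1) * (x - 2) / 6

/-- The set `R_n` of balanced rational direction vectors: `Σ_i σ_i = 1` and `n·σ` is an
integer vector whose entries pairwise differ by at most 1. -/
def balancedSet (r n : ℕ) : Set (Fin r → ℝ) :=
  {σ | (∑ i, σ i) = 1 ∧ ∃ a : Fin r → ℕ, (∀ i, (n : ℝ) * σ i = a i) ∧ ∀ i j, a i ≤ a j + 1}

/-- The normalized triangle-count polynomial `Q_n(ρ) = Σ_i C(nρ_i, 3) / C(n, 3)`. -/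
noncomputable def Qn (r n : ℕ) (ρ : Fin r → ℝ) : ℝ :=
  (∑ i, chooseThreeReal ((n : ℝ) * ρ i)) / (n.choose 3)

/-- The one-sided `L¹` distance `‖max(ρ - σ, 0)‖₁`. -/
noncomputable def l1Plus (r : ℕ) (ρ σ : Fin r → ℝ) : ℝ := ∑ i, max (ρ i - σ i) 0

lemma choose_two_mul (m : ℕ) : (m+1).choose 2 * 2 = (m+1) * m := by
  induction m with
  | zero => rfl
  | succ k ih =>
    have h : (k+2).choose 2 = (k+1).choose 1 + (k+1).choose 2 := Nat.choose_succ_succ _ _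
    calc (k+2).choose 2 * 2 = ((k+1).choose 1 + (k+1).choose 2) * 2 := by rw [h]
      _ = (k+1) * 2 + (k+1).choose 2 * 2 := by rw [Nat.choose_one_right]; ring
      _ = (k+1) * 2 + (k+1) * k := by rw [ih]
      _ = (k+2) * (k+1) := by ring

lemma choose_three_mul (m : ℕ) : (m+2).choose 3 * 6 = (m+2) * (m+1) * m := by
  induction m with
  | zero => rfl
  | succ k ih =>
    have h : (k+3).choose 3 = (k+2).choose 2 + (k+2).choose 3 := Nat.choose_succ_succ _ _
    calc (k+3).choose 3 * 6 = (k+2).choose 2 * 2 * 3 + (k+2).choose 3 * 6 := by rw [h]; ring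
      _ = (k+2) * (k+1) * 3 + (k+2) * (k+1) * k := by rw [choose_two_mul, ih]
      _ = (k+3) * (k+2) * (k+1) := by ring

lemma cast_choose_three {n : ℕ} (hn : 2 ≤ n) :
    (n.choose 3 : ℝ) = (n : ℝ) * ((n : ℝ) - 1) * ((n : ℝ) - 2) / 6 := by
  obtain ⟨m, rfl⟩ : ∃ m, n = m + 2 := ⟨n - 2, by omega⟩
  have h := choose_three_mul m
  have h' : ((m+2).choose 3 : ℝ) * 6 = ((m:ℝ)+2) * ((m:ℝ)+1) * m := by
    exact_mod_cast congrArg (Nat.cast (R := ℝ)) h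
  push_cast
  linarith [h']

lemma g_bound {n : ℕ} (hn : 4 ≤ n) {t : ℝ} (h0 : 0 ≤ t) (h1 : t ≤ 1) :
    |chooseThreeReal ((n:ℝ)*t) / (n.choose 3 : ℝ) - t^3| ≤ 20/(n:ℝ) := by
  have hc := cast_choose_three (show 2 ≤ n by omega)
  have hnR : (4:ℝ) ≤ n := by exact_mod_cast hn
  have h1n : (0:ℝ) < (n:ℝ) - 1 := by linarith
  have h2n : (0:ℝ) < (n:ℝ) - 2 := by linarith
  have hn0 : (0:ℝ) < n := by linarith
  have key : chooseThreeReal ((n:ℝ)*t) / (n.choose 3 : ℝ) - t^3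
      = t*(1-t)*(2+2*t-3*(n:ℝ)*t) / (((n:ℝ)-1)*((n:ℝ)-2)) := by
    rw [hc]; unfold chooseThreeReal; field_simp; ring
  rw [key, abs_div]
  have hden : |((n:ℝ)-1)*((n:ℝ)-2)| = ((n:ℝ)-1)*((n:ℝ)-2) := abs_of_pos (by positivity)
  rw [hden, div_le_div_iff₀ (by positivity) hn0]
  have habs : |t*(1-t)*(2+2*t-3*(n:ℝ)*t)| ≤ (1/4) * (3*(n:ℝ)+4) := by
    rw [abs_mul]
    have h14 : |t*(1-t)| ≤ 1/4 := by
      rw [abs_of_nonneg (by nlinarith)]; nlinarith [sq_nonneg (t - 1/2)]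
    have h34 : |2+2*t-3*(n:ℝ)*t| ≤ 3*(n:ℝ)+4 := by
      rw [abs_le]; constructor <;> nlinarith
    exact mul_le_mul h14 h34 (abs_nonneg _) (by norm_num)
  calc |t*(1-t)*(2+2*t-3*(n:ℝ)*t)| * (n:ℝ) ≤ (1/4) * (3*(n:ℝ)+4) * n :=
        mul_le_mul_of_nonneg_right habs (le_of_lt hn0)
    _ ≤ 20 * (((n:ℝ)-1)*((n:ℝ)-2)) := by nlinarith

lemma sum_ite_lt_nat (r k : ℕ) (h : k ≤ r) :
    (∑ i ∈ Finset.range r, (if i < k then 1 else 0)) = k := by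
  induction r with
  | zero => simp only [Finset.range_zero, Finset.sum_empty]; omega
  | succ m ih =>
    rw [Finset.sum_range_succ]
    by_cases hk : k ≤ m
    · rw [ih hk, if_neg (by omega)]; omega
    · have hk' : k = m + 1 := by omega
      have : (∑ i ∈ Finset.range m, (if i < k then 1 else 0)) = ∑ i ∈ Finset.range m, 1 := by
        apply Finset.sum_congr rfl
        intro i hi
        rw [if_pos (by simp at hi; omega)]
      rw [this, if_pos (by omega)]
      simp [hk']

set_option maxHeartbeats 1000000 in
/-- Quantitative convexity (Claim f6): if `ρ` in the standard simplex is at one-sided `L¹`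
distance `x > 0` from the balanced set `R_n`, then `Q_n(ρ)` exceeds the minimum of `Q_n` on
`R_n` by at least `x³/r²`, for `n` large. -/
theorem unbalanced_excess (r : ℕ) (hr : 2 ≤ r) (x : ℝ) (hx : 0 < x) :
    ∃ N : ℕ, ∀ n : ℕ, N ≤ n →
      ∀ ρ : Fin r → ℝ, (∀ i, 0 ≤ ρ i) → (∑ i, ρ i) = 1 →
      sInf {y | ∃ σ ∈ balancedSet r n, y = l1Plus r ρ σ} = x →
      ∀ σstar ∈ balancedSet r n,
        (∀ σ ∈ balancedSet r n, Qn r n σstar ≤ Qn r n σ) →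
        Qn r n ρ - Qn r n σstar ≥ x ^ 3 / (r : ℝ) ^ 2 := by
  refine ⟨max (3*r) (⌈(200:ℝ)*(r:ℝ)^3/x^3⌉₊ + 4), ?_⟩
  intro n hn ρ hρ0 hρsum hinf σs hσs hσmin
  have hr2 : (2:ℝ) ≤ r := by exact_mod_cast hr
  have hR0 : (0:ℝ) < r := by linarith
  have hn3r : 3*r ≤ n := le_trans (le_max_left _ _) hn
  have hn6 : 6 ≤ n := by omega
  have hn4 : 4 ≤ n := by omega
  have hn6R : (6:ℝ) ≤ n := by exact_mod_cast hn6
  have hn0 : (0:ℝ) < n := by linarith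
  have hceil : (⌈(200:ℝ)*(r:ℝ)^3/x^3⌉₊ : ℕ) ≤ n := by
    have := le_trans (le_max_right (3*r) _) hn; omega
  have hbig : (200:ℝ)*(r:ℝ)^3/x^3 ≤ n :=
    le_trans (Nat.le_ceil _) (by exact_mod_cast hceil)
  -- the explicit balanced point σ₀
  set q : ℕ := n / r with hqdef
  set k : ℕ := n % r with hkdef
  have hkr : k < r := Nat.mod_lt _ (by omega)
  have hdm : r * q + k = n := Nat.div_add_mod n r
  set a : Fin r → ℕ := fun i => if (i:ℕ) < k then q+1 else q with hadef
  have hsa : ∑ i, a i = n := by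
    have h1 : ∑ i : Fin r, a i = ∑ i ∈ Finset.range r, (if i < k then q+1 else q) :=
      Fin.sum_univ_eq_sum_range (fun m => if m < k then q+1 else q) r
    have h2 : ∀ i, (if i < k then q+1 else q) = q + (if i < k then 1 else 0) := by
      intro i; split <;> omega
    rw [h1, Finset.sum_congr rfl (fun i _ => h2 i), Finset.sum_add_distrib,
      Finset.sum_const, Finset.card_range, sum_ite_lt_nat r k (le_of_lt hkr), smul_eq_mul]
    omega
  set σ₀ : Fin r → ℝ := fun i => (a i : ℝ)/n with hσ₀def
  have hσ₀sum : ∑ i, σ₀ i = 1 := by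
    rw [hσ₀def, ← Finset.sum_div]
    rw [show ∑ i : Fin r, ((a i : ℕ) : ℝ) = ((∑ i, a i : ℕ) : ℝ) by push_cast; rfl, hsa]
    field_simp
  have hσ₀mem : σ₀ ∈ balancedSet r n := by
    refine ⟨hσ₀sum, a, fun i => ?_, fun i j => ?_⟩
    · show (n:ℝ) * ((a i : ℝ)/n) = a i
      field_simp
    · show (if (i:ℕ) < k then q+1 else q) ≤ (if (j:ℕ) < k then q+1 else q) + 1
      split <;> split <;> omega
  have hq1 : (r:ℝ)*q ≤ n := by exact_mod_cast (show r*q ≤ n by omega)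
  have hq2 : (n:ℝ) ≤ r*q + r := by exact_mod_cast (show n ≤ r*q + r by omega)
  have haq : ∀ i, q ≤ a i ∧ a i ≤ q + 1 := by
    intro i; constructor <;> (show _ ; simp only [hadef]) <;> split <;> omega
  have hσ₀low : ∀ i, 1/(r:ℝ) - 1/n ≤ σ₀ i := by
    intro i
    have ha1 : (q:ℝ) ≤ a i := by exact_mod_cast (haq i).1
    show 1/(r:ℝ) - 1/n ≤ (a i : ℝ)/n
    rw [le_div_iff₀ hn0]
    have hnr' : (n:ℝ)/r ≤ q + 1 := by rw [div_le_iff₀ hR0]; linarith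
    have hexp : (1/(r:ℝ) - 1/n)*n = n/r - 1 := by field_simp
    linarith
  have hσ₀high : ∀ i, σ₀ i ≤ 1/(r:ℝ) + 1/n := by
    intro i
    have ha2 : (a i : ℝ) ≤ q + 1 := by exact_mod_cast (haq i).2
    show (a i : ℝ)/n ≤ 1/(r:ℝ) + 1/n
    rw [div_le_iff₀ hn0]
    have hnr' : (q:ℝ) ≤ n/r := by rw [le_div_iff₀ hR0]; linarith
    have hexp : (1/(r:ℝ) + 1/n)*n = n/r + 1 := by field_simp
    linarith
  have hσ₀0 : ∀ i, 0 ≤ σ₀ i := by intro i; show (0:ℝ) ≤ (a i : ℝ)/n; positivity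
  have hhalf : 1/(r:ℝ) ≤ 1/2 := by
    rw [div_le_div_iff₀ hR0 (by norm_num)]; linarith
  have hσ₀1 : ∀ i, σ₀ i ≤ 1 := by
    intro i
    have h2 : 1/(n:ℝ) ≤ 1/2 := by rw [div_le_div_iff₀ hn0 (by norm_num)]; linarith
    linarith [hσ₀high i]
  -- Qn approximation
  have hQ : ∀ τ : Fin r → ℝ, (∀ i, 0 ≤ τ i) → (∀ i, τ i ≤ 1) →
      (∑ i, τ i^3) - 20*r/n ≤ Qn r n τ ∧ Qn r n τ ≤ (∑ i, τ i^3) + 20*r/n := by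
    intro τ h0 h1
    have hterm : ∀ i, |chooseThreeReal ((n:ℝ)*τ i)/(n.choose 3 :ℝ) - τ i^3| ≤ 20/(n:ℝ) :=
      fun i => g_bound hn4 (h0 i) (h1 i)
    have hQeq : Qn r n τ = ∑ i, chooseThreeReal ((n:ℝ)*τ i)/(n.choose 3:ℝ) := by
      rw [Qn, Finset.sum_div]
    have hconst : ∑ _i : Fin r, (20/(n:ℝ)) = 20*r/n := by
      rw [Finset.sum_const, card_univ, Fintype.card_fin, nsmul_eq_mul]; ring
    constructor
    · rw [hQeq]
      have hle : ∀ i ∈ univ, τ i^3 - 20/(n:ℝ) ≤ chooseThreeReal ((n:ℝ)*τ i)/(n.choose 3:ℝ) :=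
        fun i _ => by linarith [(abs_le.mp (hterm i)).1]
      calc (∑ i, τ i^3) - 20*r/n = ∑ i : Fin r, (τ i^3 - 20/(n:ℝ)) := by
            rw [Finset.sum_sub_distrib, hconst]
        _ ≤ _ := Finset.sum_le_sum hle
    · rw [hQeq]
      have hle : ∀ i ∈ univ, chooseThreeReal ((n:ℝ)*τ i)/(n.choose 3:ℝ) ≤ τ i^3 + 20/(n:ℝ) :=
        fun i _ => by linarith [(abs_le.mp (hterm i)).2]
      calc ∑ i, chooseThreeReal ((n:ℝ)*τ i)/(n.choose 3:ℝ)
          ≤ ∑ i : Fin r, (τ i^3 + 20/(n:ℝ)) := Finset.sum_le_sum hle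
        _ = (∑ i, τ i^3) + 20*r/n := by rw [Finset.sum_add_distrib, hconst]
  have hρ1 : ∀ i, ρ i ≤ 1 := by
    intro i
    calc ρ i ≤ ∑ j, ρ j := Finset.single_le_sum (fun j _ => hρ0 j) (mem_univ i)
      _ = 1 := hρsum
  have hQρ : (∑ i, ρ i^3) - 20*r/n ≤ Qn r n ρ := (hQ ρ hρ0 hρ1).1
  have hQσ₀ : Qn r n σ₀ ≤ (∑ i, σ₀ i^3) + 20*r/n := (hQ σ₀ hσ₀0 hσ₀1).2
  -- bound for Σ σ₀³
  have hσ₀cube : ∑ i, σ₀ i^3 ≤ (r:ℝ) * (1/r + 1/n)^3 := by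
    calc ∑ i, σ₀ i^3 ≤ ∑ _i : Fin r, (1/(r:ℝ) + 1/n)^3 :=
          Finset.sum_le_sum (fun i _ => pow_le_pow_left₀ (hσ₀0 i) (hσ₀high i) 3)
      _ = (r:ℝ) * (1/r + 1/n)^3 := by
          rw [Finset.sum_const, card_univ, Fintype.card_fin, nsmul_eq_mul]
  have hsmall : (r:ℝ)*(1/r + 1/n)^3 ≤ 1/(r:ℝ)^2 + 7*r/n := by
    have hexp : (r:ℝ)*(1/r + 1/n)^3 = 1/(r:ℝ)^2 + 3/((r:ℝ)*n) + 3/(n:ℝ)^2 + (r:ℝ)/n^3 := by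
      field_simp; ring
    have t1 : 3/((r:ℝ)*n) ≤ 2*r/n := by
      rw [div_le_div_iff₀ (by positivity) hn0]
      nlinarith only [hn0, mul_nonneg (sub_nonneg.mpr hr2) hn0.le,
        mul_nonneg (mul_nonneg (sub_nonneg.mpr hr2) hR0.le) hn0.le]
    have t2 : 3/(n:ℝ)^2 ≤ 2*r/n := by
      rw [div_le_div_iff₀ (by positivity) hn0]
      nlinarith only [hn0, mul_nonneg (sub_nonneg.mpr hr2) (mul_nonneg hn0.le hn0.le),
        mul_nonneg (sub_nonneg.mpr hn6R) hn0.le]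
    have t3 : (r:ℝ)/n^3 ≤ 2*r/n := by
      rw [div_le_div_iff₀ (by positivity) hn0]
      nlinarith only [mul_nonneg (mul_nonneg hR0.le hn0.le)
          (sub_nonneg.mpr (by nlinarith only [hn6R, sq_nonneg ((n:ℝ)-1)] : (1:ℝ) ≤ (n:ℝ)^2)),
        mul_nonneg hR0.le hn0.le]
    have t4 : 2*(r:ℝ)/n + 2*r/n + 2*r/n ≤ 7*r/n := by
      have h67 : (6:ℝ)*r/n ≤ 7*r/n :=
        (div_le_div_iff_of_pos_right hn0).mpr (by linarith only [hR0])
      have heq : 2*(r:ℝ)/n + 2*r/n + 2*r/n = 6*r/n := by ring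
      linarith
    linarith
  have hQσs : Qn r n σs ≤ 1/(r:ℝ)^2 + 27*r/n := by
    have h1 := hσmin σ₀ hσ₀mem
    have h2 : 20*(r:ℝ)/n + 7*r/n = 27*r/n := by ring
    linarith
  -- convexity lower bound for Σ ρ³
  have hd0 : ∑ i, (ρ i - 1/(r:ℝ)) = 0 := by
    rw [Finset.sum_sub_distrib, hρsum, Finset.sum_const, card_univ, Fintype.card_fin,
      nsmul_eq_mul]
    field_simp; ring
  have hcube : 1/(r:ℝ)^2 + (2/r) * ∑ i, (ρ i - 1/(r:ℝ))^2 ≤ ∑ i, ρ i^3 := by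
    have hterm : ∀ i ∈ univ,
        1/(r:ℝ)^3 + (3/(r:ℝ)^2)*(ρ i - 1/r) + (2/(r:ℝ))*(ρ i - 1/r)^2 ≤ ρ i^3 := by
      intro i _
      have hid : ρ i^3 = 1/(r:ℝ)^3 + (3/(r:ℝ)^2)*(ρ i - 1/r) + (2/(r:ℝ))*(ρ i - 1/r)^2
          + (ρ i - 1/(r:ℝ))^2 * ρ i := by
        field_simp; ring
      nlinarith only [hid, mul_nonneg (sq_nonneg (ρ i - 1/(r:ℝ))) (hρ0 i)]
    have hsum := Finset.sum_le_sum hterm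
    have heq : ∑ i : Fin r, (1/(r:ℝ)^3 + (3/(r:ℝ)^2)*(ρ i - 1/r) + (2/(r:ℝ))*(ρ i - 1/r)^2)
        = (r:ℝ)*(1/(r:ℝ)^3) + (3/(r:ℝ)^2)*(∑ i, (ρ i - 1/(r:ℝ)))
          + (2/(r:ℝ))*(∑ i, (ρ i - 1/(r:ℝ))^2) := by
      rw [Finset.sum_add_distrib, Finset.sum_add_distrib, Finset.sum_const, card_univ,
        Fintype.card_fin, nsmul_eq_mul, ← Finset.mul_sum, ← Finset.mul_sum]
    have hr3 : (r:ℝ)*(1/(r:ℝ)^3) = 1/(r:ℝ)^2 := by field_simp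
    rw [heq, hd0, hr3] at hsum
    linarith
  -- Cauchy–Schwarz
  have hCS : (∑ i, max (ρ i - 1/(r:ℝ)) 0)^2 ≤ (r:ℝ) * ∑ i, (ρ i - 1/(r:ℝ))^2 := by
    have h1 := sq_sum_le_card_mul_sum_sq (s := (univ : Finset (Fin r)))
      (f := fun i => max (ρ i - 1/(r:ℝ)) 0)
    have h2 : ∑ i, (max (ρ i - 1/(r:ℝ)) 0)^2 ≤ ∑ i, (ρ i - 1/(r:ℝ))^2 := by
      refine Finset.sum_le_sum fun i _ => ?_
      rcases le_or_gt 0 (ρ i - 1/(r:ℝ)) with h | h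
      · rw [max_eq_left h]
      · rw [max_eq_right h.le]; simpa using sq_nonneg (ρ i - 1/(r:ℝ))
    have h3 : ((univ : Finset (Fin r)).card : ℝ) = r := by
      rw [card_univ, Fintype.card_fin]
    calc (∑ i, max (ρ i - 1/(r:ℝ)) 0)^2
        ≤ ((univ : Finset (Fin r)).card : ℝ) * ∑ i, (max (ρ i - 1/(r:ℝ)) 0)^2 := h1
      _ ≤ (r:ℝ) * ∑ i, (ρ i - 1/(r:ℝ))^2 := by
          rw [h3]; exact mul_le_mul_of_nonneg_left h2 (le_of_lt hR0)
  -- relating x to the distance from the uniform vector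
  set s : ℝ := ∑ i, max (ρ i - 1/(r:ℝ)) 0 with hsdef
  have hs0 : 0 ≤ s := Finset.sum_nonneg fun i _ => le_max_right _ _
  have hbdd : BddBelow {y | ∃ σ ∈ balancedSet r n, y = l1Plus r ρ σ} := by
    refine ⟨0, ?_⟩
    rintro y ⟨σ, hσ, rfl⟩
    exact Finset.sum_nonneg fun i _ => le_max_right _ _
  have hxle : x ≤ l1Plus r ρ σ₀ := by
    rw [← hinf]; exact csInf_le hbdd ⟨σ₀, hσ₀mem, rfl⟩
  have hl1s : l1Plus r ρ σ₀ ≤ s + r/n := by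
    have hterm : ∀ i ∈ univ, max (ρ i - σ₀ i) 0 ≤ max (ρ i - 1/(r:ℝ)) 0 + 1/n := by
      intro i _
      refine max_le ?_ ?_
      · linarith [hσ₀low i, le_max_left (ρ i - 1/(r:ℝ)) 0]
      · have h1n : (0:ℝ) < 1/n := by positivity
        linarith [le_max_right (ρ i - 1/(r:ℝ)) 0]
    calc l1Plus r ρ σ₀ ≤ ∑ i : Fin r, (max (ρ i - 1/(r:ℝ)) 0 + 1/n) :=
          Finset.sum_le_sum hterm
      _ = s + r/n := by
          rw [Finset.sum_add_distrib, Finset.sum_const, card_univ, Fintype.card_fin,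
            nsmul_eq_mul, hsdef]
          ring
  have hx1 : x ≤ 1 := by
    have h1 : l1Plus r ρ σ₀ ≤ ∑ i, ρ i := by
      refine Finset.sum_le_sum fun i _ => ?_
      exact max_le (by linarith [hσ₀0 i]) (hρ0 i)
    rw [hρsum] at h1
    linarith
  -- numeric endgame
  clear_value q k a σ₀ s
  have hbig' : 200*(r:ℝ)^3 ≤ n * x^3 := by
    rw [div_le_iff₀ (by positivity)] at hbig
    linarith
  have hxx2 : x^2 ≤ x := by nlinarith only [mul_nonneg hx.le (sub_nonneg.mpr hx1)]
  have hx3x2 : x^3 ≤ x^2 := by nlinarith only [mul_le_mul_of_nonneg_left hxx2 hx.le]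
  have hx3x : x^3 ≤ x := le_trans hx3x2 hxx2
  have hrr : (r:ℝ) ≤ (r:ℝ)^3 := by
    nlinarith only [mul_nonneg (mul_nonneg hR0.le hR0.le) (sub_nonneg.mpr hr2),
      mul_nonneg hR0.le (sub_nonneg.mpr hr2)]
  have hrn : (r:ℝ)/n ≤ x/200 := by
    rw [div_le_div_iff₀ hn0 (by norm_num)]
    linarith [hbig', hrr, mul_le_mul_of_nonneg_left hx3x hn0.le]
  have hr3n : 47*(r:ℝ)^3/n ≤ x^3/4 := by
    rw [div_le_div_iff₀ hn0 (by norm_num)]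
    linarith [hbig', pow_nonneg hR0.le 3]
  have hsx : x - (r:ℝ)/n ≤ s := by linarith
  have hsxpos : 0 ≤ x - (r:ℝ)/n := by
    have : x/200 ≤ x := by linarith
    linarith
  have hs2 : (x - (r:ℝ)/n)^2 ≤ s^2 := pow_le_pow_left₀ hsxpos hsx 2
  have hxe : x*((r:ℝ)/n) ≤ x*(x/200) := mul_le_mul_of_nonneg_left hrn hx.le
  have key2 : x^3 + 47*(r:ℝ)^3/n ≤ 2*s^2 := by
    have hexp2 : (x - (r:ℝ)/n)^2 = x^2 - 2*(x*((r:ℝ)/n)) + ((r:ℝ)/n)^2 := by ring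
    linarith [hs2, hexp2, hxe, hx3x2, hr3n, sq_nonneg ((r:ℝ)/n), sq_nonneg x]
  have hd2 : s^2/(r:ℝ) ≤ ∑ i, (ρ i - 1/(r:ℝ))^2 := by
    rw [div_le_iff₀ hR0]; linarith [hCS]
  have hA : x^3/(r:ℝ)^2 + 47*r/n ≤ 2*s^2/(r:ℝ)^2 := by
    have h1 : (x^3 + 47*(r:ℝ)^3/n)/(r:ℝ)^2 ≤ (2*s^2)/(r:ℝ)^2 :=
      (div_le_div_iff_of_pos_right (pow_pos hR0 2)).mpr key2
    have h2' : 47*(r:ℝ)^3/n/(r:ℝ)^2 = 47*r/n := by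
      rw [div_div, div_eq_div_iff (mul_pos hn0 (pow_pos hR0 2)).ne' hn0.ne']
      ring
    have h2 : (x^3 + 47*(r:ℝ)^3/n)/(r:ℝ)^2 = x^3/(r:ℝ)^2 + 47*r/n := by
      rw [add_div, h2']
    linarith only [h1, h2]
  have hchain : 2*s^2/(r:ℝ)^2 - 47*r/n ≤ Qn r n ρ - Qn r n σs := by
    have h1 : (2/(r:ℝ))*(s^2/r) ≤ (2/(r:ℝ))*(∑ i, (ρ i - 1/(r:ℝ))^2) :=
      mul_le_mul_of_nonneg_left hd2 (by positivity)
    have h2 : 2*s^2/(r:ℝ)^2 = (2/(r:ℝ))*(s^2/r) := by ring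
    have hbr : 20*(r:ℝ)/(n:ℝ) + 27*(r:ℝ)/(n:ℝ) = 47*(r:ℝ)/(n:ℝ) := by ring
    linarith only [h1, h2, hQρ, hcube, hQσs, hbr]
  rw [ge_iff_le]
  linarith only [hA, hchain]
end
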